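/- arXiv:2109.01253 — 6 statements merged into one kernel-verified Lean document; each statement's English description precedes it below -/
import Mathlib

section
/- Discrete energy law for the first-order scheme (Theorem 3.1). Suppose the scheme equations (i)–(iii), the scalar auxiliary-variable equation (iv), and the integration-by-parts identities (v) (all listed in the context) hold. Define, for k ∈ {n, n+1}, the discrete energy E^k := (S₁/2)∫|∇φ^k|² + (S₂/(2ε²))∫(φ^k)² + (λ/(2εK))∫(T^k)² + (R^k)². Then E^{n+1} − E^n = −Q − τ·( ∫ ϱⁿ·((φ^{n+1} − φⁿ)/τ)² + (λD/(εK))∫|∇T^{n+1}|² ), where Q := ((S₁+2S₄)/2)∫|∇φ^{n+1} − ∇φⁿ|² + ((S₂+2S₃)/(2ε²))∫(φ^{n+1} − φⁿ)² + (λ/(2εK))∫(T^{n+1} − Tⁿ)² + (R^{n+1} − Rⁿ)². -/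
open MeasureTheory
open scoped RealInnerProductSpace

/-- The plane `ℝ²`. -/
noncomputable abbrev Plane := EuclideanSpace ℝ (Fin 2)

/-- The Laplacian of a function `f : ℝ² → ℝ`, i.e. the trace of its second derivative. -/
noncomputable def lap (f : Plane → ℝ) (x : Plane) : ℝ :=
  ∑ i : Fin 2,
    fderiv ℝ (fun y => fderiv ℝ f y (EuclideanSpace.single i 1)) x (EuclideanSpace.single i 1)

/-- **Discrete energy law for the first-order scheme (Theorem 3.1).**
`φn, Tn, Rn` are the solution at time level `n`; `φm, Tm, Rm` at level `n+1`;
`g = g(φⁿ)`, `h = h′(φⁿ)`, `ρ = ϱ(φⁿ)`, `e = E₁(φⁿ) > 0`, `ξ = R^{n+1}/√e`. -/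
theorem first_order_discrete_energy_law
    (Ω : Set Plane) (hΩ : MeasurableSet Ω)
    (τ ε lam D K S1 S2 S3 S4 : ℝ)
    (hτ : 0 < τ) (hε : 0 < ε) (hlam : 0 < lam) (hD : 0 < D) (hK : 0 < K)
    (φn φm Tn Tm : Plane → ℝ)
    (hφn : ContDiff ℝ 2 φn) (hφm : ContDiff ℝ 2 φm)
    (hTn : ContDiff ℝ 2 Tn) (hTm : ContDiff ℝ 2 Tm)
    (μn μm g h ρ : Plane → ℝ) (hρ : ∀ x ∈ Ω, 0 < ρ x)
    (e : ℝ) (he : 0 < e) (Rn Rm ξ : ℝ) (hξ : ξ = Rm / Real.sqrt e)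
    -- every integrand appearing is assumed integrable over Ω:
    (hI1 : IntegrableOn (fun x => ‖gradient φm x‖ ^ 2) Ω)
    (hI2 : IntegrableOn (fun x => ‖gradient φn x‖ ^ 2) Ω)
    (hI3 : IntegrableOn (fun x => (φm x) ^ 2) Ω)
    (hI4 : IntegrableOn (fun x => (φn x) ^ 2) Ω)
    (hI5 : IntegrableOn (fun x => (Tm x) ^ 2) Ω)
    (hI6 : IntegrableOn (fun x => (Tn x) ^ 2) Ω)
    (hI7 : IntegrableOn (fun x => ‖gradient φm x - gradient φn x‖ ^ 2) Ω)
    (hI8 : IntegrableOn (fun x => (φm x - φn x) ^ 2) Ω)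
    (hI9 : IntegrableOn (fun x => (Tm x - Tn x) ^ 2) Ω)
    (hI10 : IntegrableOn (fun x => ρ x * ((φm x - φn x) / τ) ^ 2) Ω)
    (hI11 : IntegrableOn (fun x => ‖gradient Tm x‖ ^ 2) Ω)
    (hI12 : IntegrableOn (fun x => g x * (φm x - φn x) / τ) Ω)
    (hI13 : IntegrableOn (fun x => h x * (1 / ρ x) * (μn x * Tm x - μm x * Tn x)) Ω)
    (hI14 : IntegrableOn (fun x => h x * (1 / ρ x) * Tn x *
        ((S3 / ε ^ 2) * (φm x - φn x) - S4 * (lap φm x - lap φn x))) Ω)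
    (hI15 : IntegrableOn (fun x => lap φm x * (φm x - φn x)) Ω)
    (hI16 : IntegrableOn (fun x => ⟪gradient φm x, gradient φm x - gradient φn x⟫) Ω)
    (hI17 : IntegrableOn (fun x => lap φn x * (φm x - φn x)) Ω)
    (hI18 : IntegrableOn (fun x => ⟪gradient φn x, gradient φm x - gradient φn x⟫) Ω)
    (hI19 : IntegrableOn (fun x => lap Tm x * Tm x) Ω)
    -- (i) the phase-field update:
    (hi : ∀ x ∈ Ω, (φm x - φn x) / τ
        = (1 / ρ x) * (μm x - (S3 / ε ^ 2) * (φm x - φn x) + S4 * (lap φm x - lap φn x)))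
    -- (ii) the chemical potential:
    (hii : ∀ x ∈ Ω, μm x
        = -(ξ * g x) + S1 * lap φm x - (S2 / ε ^ 2) * φm x - ξ * (lam / ε) * h x * Tn x)
    -- (iii) the temperature update:
    (hiii : ∀ x ∈ Ω, (Tm x - Tn x) / τ
        = D * lap Tm x + ξ * K * h x * (1 / ρ x) * μn x)
    -- (iv) the scalar auxiliary-variable equation:
    (hiv : (Rm - Rn) / τ
        = (1 / (2 * Real.sqrt e)) *
            ((∫ x in Ω, g x * (φm x - φn x) / τ)
              - (lam / ε) * (∫ x in Ω, h x * (1 / ρ x) * (μn x * Tm x - μm x * Tn x))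
              - (lam / ε) * (∫ x in Ω, h x * (1 / ρ x) * Tn x *
                  ((S3 / ε ^ 2) * (φm x - φn x) - S4 * (lap φm x - lap φn x)))))
    -- (v) integration by parts identities:
    (hibp1 : (∫ x in Ω, lap φm x * (φm x - φn x))
        = -∫ x in Ω, ⟪gradient φm x, gradient φm x - gradient φn x⟫)
    (hibp2 : (∫ x in Ω, lap φn x * (φm x - φn x))
        = -∫ x in Ω, ⟪gradient φn x, gradient φm x - gradient φn x⟫)
    (hibp3 : (∫ x in Ω, lap Tm x * Tm x) = -∫ x in Ω, ‖gradient Tm x‖ ^ 2) :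
    -- conclusion: E^{n+1} − E^n = −Q − τ·(dissipation)
    ((S1 / 2) * (∫ x in Ω, ‖gradient φm x‖ ^ 2)
        + (S2 / (2 * ε ^ 2)) * (∫ x in Ω, (φm x) ^ 2)
        + (lam / (2 * ε * K)) * (∫ x in Ω, (Tm x) ^ 2) + Rm ^ 2)
      - ((S1 / 2) * (∫ x in Ω, ‖gradient φn x‖ ^ 2)
        + (S2 / (2 * ε ^ 2)) * (∫ x in Ω, (φn x) ^ 2)
        + (lam / (2 * ε * K)) * (∫ x in Ω, (Tn x) ^ 2) + Rn ^ 2)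
    = -(((S1 + 2 * S4) / 2) * (∫ x in Ω, ‖gradient φm x - gradient φn x‖ ^ 2)
          + ((S2 + 2 * S3) / (2 * ε ^ 2)) * (∫ x in Ω, (φm x - φn x) ^ 2)
          + (lam / (2 * ε * K)) * (∫ x in Ω, (Tm x - Tn x) ^ 2)
          + (Rm - Rn) ^ 2)
        - τ * ((∫ x in Ω, ρ x * ((φm x - φn x) / τ) ^ 2)
          + (lam * D / (ε * K)) * ∫ x in Ω, ‖gradient Tm x‖ ^ 2) := by
  -- abbreviations for the pointwise integrands appearing in (iv)
  have hτ' : τ ≠ 0 := hτ.ne'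
  have hε' : ε ≠ 0 := hε.ne'
  have hK' : K ≠ 0 := hK.ne'
  -- the master pointwise identity on Ω
  have key : ∀ x ∈ Ω,
      τ * ξ * (lam / ε) *
        (h x * (1 / ρ x) * (μn x * Tm x - μm x * Tn x)
          + h x * (1 / ρ x) * Tn x *
              ((S3 / ε ^ 2) * (φm x - φn x) - S4 * (lap φm x - lap φn x)))
      = lam / (2 * ε * K) * ((Tm x) ^ 2 - (Tn x) ^ 2 + (Tm x - Tn x) ^ 2)
        - τ * (lam * D / (ε * K)) * (lap Tm x * Tm x)
        + τ * (ρ x * ((φm x - φn x) / τ) ^ 2)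
        + S3 / ε ^ 2 * (φm x - φn x) ^ 2
        - (S4 + S1) * (lap φm x * (φm x - φn x))
        + S4 * (lap φn x * (φm x - φn x))
        + τ * ξ * (g x * (φm x - φn x) / τ)
        + S2 / (2 * ε ^ 2) * ((φm x) ^ 2 - (φn x) ^ 2 + (φm x - φn x) ^ 2) := by
    intro x hx
    have hr : ρ x ≠ 0 := (hρ x hx).ne'
    have h1 := hi x hx
    have h2 := hii x hx
    have h3 := hiii x hx
    linear_combination (norm := skip)
      (τ * ξ * (lam / ε) * h x * Tn x - ρ x * (φm x - φn x)) * h1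
        - (φm x - φn x) * h2 - (τ * lam * Tm x / (ε * K)) * h3
    field_simp
    ring
  -- integrate the master identity over Ω
  have master := setIntegral_congr_fun (μ := MeasureTheory.volume) hΩ key
  -- integrability of the pieces of the right-hand side
  have i56 : IntegrableOn (fun x => (Tm x) ^ 2 - (Tn x) ^ 2) Ω := hI5.sub hI6
  have i34 : IntegrableOn (fun x => (φm x) ^ 2 - (φn x) ^ 2) Ω := hI3.sub hI4
  have i12 : IntegrableOn (fun x => ‖gradient φm x‖ ^ 2 - ‖gradient φn x‖ ^ 2) Ω := hI1.sub hI2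
  have iT1 : IntegrableOn
      (fun x => lam / (2 * ε * K) * ((Tm x) ^ 2 - (Tn x) ^ 2 + (Tm x - Tn x) ^ 2)) Ω :=
    (i56.add hI9).const_mul _
  have iT2 : IntegrableOn (fun x => τ * (lam * D / (ε * K)) * (lap Tm x * Tm x)) Ω :=
    hI19.const_mul _
  have iT3 : IntegrableOn (fun x => τ * (ρ x * ((φm x - φn x) / τ) ^ 2)) Ω :=
    hI10.const_mul _
  have iT4 : IntegrableOn (fun x => S3 / ε ^ 2 * (φm x - φn x) ^ 2) Ω :=
    hI8.const_mul _
  have iT5 : IntegrableOn (fun x => (S4 + S1) * (lap φm x * (φm x - φn x))) Ω :=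
    hI15.const_mul _
  have iT6 : IntegrableOn (fun x => S4 * (lap φn x * (φm x - φn x))) Ω :=
    hI17.const_mul _
  have iT7 : IntegrableOn (fun x => τ * ξ * (g x * (φm x - φn x) / τ)) Ω :=
    hI12.const_mul _
  have iT8 : IntegrableOn
      (fun x => S2 / (2 * ε ^ 2) * ((φm x) ^ 2 - (φn x) ^ 2 + (φm x - φn x) ^ 2)) Ω :=
    (i34.add hI8).const_mul _
  have iP1 : IntegrableOn (fun x => lam / (2 * ε * K) * ((Tm x) ^ 2 - (Tn x) ^ 2 + (Tm x - Tn x) ^ 2) - τ * (lam * D / (ε * K)) * (lap Tm x * Tm x)) Ω := iT1.sub iT2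
  have iP2 : IntegrableOn (fun x => lam / (2 * ε * K) * ((Tm x) ^ 2 - (Tn x) ^ 2 + (Tm x - Tn x) ^ 2) - τ * (lam * D / (ε * K)) * (lap Tm x * Tm x) + τ * (ρ x * ((φm x - φn x) / τ) ^ 2)) Ω := iP1.add iT3
  have iP3 : IntegrableOn (fun x => lam / (2 * ε * K) * ((Tm x) ^ 2 - (Tn x) ^ 2 + (Tm x - Tn x) ^ 2) - τ * (lam * D / (ε * K)) * (lap Tm x * Tm x) + τ * (ρ x * ((φm x - φn x) / τ) ^ 2) + S3 / ε ^ 2 * (φm x - φn x) ^ 2) Ω := iP2.add iT4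
  have iP4 : IntegrableOn (fun x => lam / (2 * ε * K) * ((Tm x) ^ 2 - (Tn x) ^ 2 + (Tm x - Tn x) ^ 2) - τ * (lam * D / (ε * K)) * (lap Tm x * Tm x) + τ * (ρ x * ((φm x - φn x) / τ) ^ 2) + S3 / ε ^ 2 * (φm x - φn x) ^ 2 - (S4 + S1) * (lap φm x * (φm x - φn x))) Ω := iP3.sub iT5
  have iP5 : IntegrableOn (fun x => lam / (2 * ε * K) * ((Tm x) ^ 2 - (Tn x) ^ 2 + (Tm x - Tn x) ^ 2) - τ * (lam * D / (ε * K)) * (lap Tm x * Tm x) + τ * (ρ x * ((φm x - φn x) / τ) ^ 2) + S3 / ε ^ 2 * (φm x - φn x) ^ 2 - (S4 + S1) * (lap φm x * (φm x - φn x)) + S4 * (lap φn x * (φm x - φn x))) Ω := iP4.add iT6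
  have iP6 : IntegrableOn (fun x => lam / (2 * ε * K) * ((Tm x) ^ 2 - (Tn x) ^ 2 + (Tm x - Tn x) ^ 2) - τ * (lam * D / (ε * K)) * (lap Tm x * Tm x) + τ * (ρ x * ((φm x - φn x) / τ) ^ 2) + S3 / ε ^ 2 * (φm x - φn x) ^ 2 - (S4 + S1) * (lap φm x * (φm x - φn x)) + S4 * (lap φn x * (φm x - φn x)) + τ * ξ * (g x * (φm x - φn x) / τ)) Ω := iP5.add iT7
  rw [integral_const_mul, integral_add hI13 hI14,
      integral_add iP6 iT8, integral_add iP5 iT7, integral_add iP4 iT6,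
      integral_sub iP3 iT5, integral_add iP2 iT4, integral_add iP1 iT3,
      integral_sub iT1 iT2,
      integral_const_mul, integral_const_mul, integral_const_mul, integral_const_mul,
      integral_const_mul, integral_const_mul, integral_const_mul, integral_const_mul,
      integral_add i56 hI9, integral_sub hI5 hI6,
      integral_add i34 hI8, integral_sub hI3 hI4] at master
  -- inner-product identities
  have ptw1 : ∀ x : Plane, ⟪gradient φm x, gradient φm x - gradient φn x⟫
      = (‖gradient φm x‖ ^ 2 - ‖gradient φn x‖ ^ 2
          + ‖gradient φm x - gradient φn x‖ ^ 2) / 2 := by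
    intro x
    have hns := norm_sub_sq_real (gradient φm x) (gradient φn x)
    have h2 : ⟪gradient φm x, gradient φm x - gradient φn x⟫
        = ⟪gradient φm x, gradient φm x⟫ - ⟪gradient φm x, gradient φn x⟫ :=
      inner_sub_right _ _ _
    rw [real_inner_self_eq_norm_sq] at h2
    linarith
  have ptw2 : ∀ x : Plane, ⟪gradient φn x, gradient φm x - gradient φn x⟫
      = (‖gradient φm x‖ ^ 2 - ‖gradient φn x‖ ^ 2
          - ‖gradient φm x - gradient φn x‖ ^ 2) / 2 := by
    intro x
    have hns := norm_sub_sq_real (gradient φm x) (gradient φn x)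
    have h2 : ⟪gradient φn x, gradient φm x - gradient φn x⟫
        = ⟪gradient φm x, gradient φn x⟫ - ‖gradient φn x‖ ^ 2 := by
      rw [inner_sub_right, real_inner_self_eq_norm_sq,
        real_inner_comm (gradient φn x) (gradient φm x)]
    linarith
  have hK16 : (∫ x in Ω, ⟪gradient φm x, gradient φm x - gradient φn x⟫)
      = ((∫ x in Ω, ‖gradient φm x‖ ^ 2) - (∫ x in Ω, ‖gradient φn x‖ ^ 2)
          + ∫ x in Ω, ‖gradient φm x - gradient φn x‖ ^ 2) / 2 := by
    rw [setIntegral_congr_fun hΩ (fun x _ => ptw1 x), integral_div,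
        integral_add i12 hI7, integral_sub hI1 hI2]
  have hK18 : (∫ x in Ω, ⟪gradient φn x, gradient φm x - gradient φn x⟫)
      = ((∫ x in Ω, ‖gradient φm x‖ ^ 2) - (∫ x in Ω, ‖gradient φn x‖ ^ 2)
          - ∫ x in Ω, ‖gradient φm x - gradient φn x‖ ^ 2) / 2 := by
    rw [setIntegral_congr_fun hΩ (fun x _ => ptw2 x), integral_div,
        integral_sub i12 hI7, integral_sub hI1 hI2]
  -- the SAV equation, cleared
  have hs : Real.sqrt e ≠ 0 := (Real.sqrt_pos.mpr he).ne'
  have hxi : 2 * Rm * (1 / (2 * Real.sqrt e)) = ξ := by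
    rw [hξ]
    field_simp
  have hiv' := (div_eq_iff hτ').mp hiv
  have F4 : Rm ^ 2 - Rn ^ 2 + (Rm - Rn) ^ 2
      = τ * ξ * ((∫ x in Ω, g x * (φm x - φn x) / τ)
          - (lam / ε) * (∫ x in Ω, h x * (1 / ρ x) * (μn x * Tm x - μm x * Tn x))
          - (lam / ε) * (∫ x in Ω, h x * (1 / ρ x) * Tn x *
              ((S3 / ε ^ 2) * (φm x - φn x) - S4 * (lap φm x - lap φn x)))) := by
    linear_combination (2 * Rm) * hiv'
      + (τ * ((∫ x in Ω, g x * (φm x - φn x) / τ)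
          - (lam / ε) * (∫ x in Ω, h x * (1 / ρ x) * (μn x * Tm x - μm x * Tn x))
          - (lam / ε) * (∫ x in Ω, h x * (1 / ρ x) * Tn x *
              ((S3 / ε ^ 2) * (φm x - φn x) - S4 * (lap φm x - lap φn x))))) * hxi
  -- put everything together
  linear_combination F4 - master
    + (S4 + S1) * hibp1 - S4 * hibp2 + (τ * (lam * D / (ε * K))) * hibp3
    - (S4 + S1) * hK16 + S4 * hK18
end

section
/- Discrete energy law for the second-order BDF2 scheme (Theorem 4.1). Suppose the scheme equations (i)–(iv) and the integration-by-parts identities (v) (all listed in the context) hold. Define, for k ∈ {n, n+1}, E^k := (1/4)·[ S₁(∫|∇φ^k|² + ∫|2∇φ^k − ∇φ^{k−1}|²) + (S₂/ε²)(∫(φ^k)² + ∫(2φ^k − φ^{k−1})²) + (2S₃/ε²)∫(φ^k − φ^{k−1})² + 2S₄∫|∇(φ^k − φ^{k−1})|² + (λ/(εK))(∫(T^k)² + ∫(2T^k − T^{k−1})²) + 2((R^k)² + (2R^k − R^{k−1})²) ]. Then E^{n+1} − E^n = −Q − τ·( ∫ ϱ̄·((3φ^{n+1} − 4φⁿ +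 φ^{n−1})/(2τ))² + (λD/(εK))∫|∇T^{n+1}|² ), where Q := ((S₁+4S₄)/4)∫|∇(φ^{n+1} − 2φⁿ + φ^{n−1})|² + ((S₂+4S₃)/(4ε²))∫(φ^{n+1} − 2φⁿ + φ^{n−1})² + (λ/(4εK))∫(T^{n+1} − 2Tⁿ + T^{n−1})² + (1/2)(R^{n+1} − 2Rⁿ + R^{n−1})². -/
open MeasureTheory
open scoped RealInnerProductSpace

section Aux

variable {E : Type*} [NormedAddCommGroup E] [InnerProductSpace ℝ E]

lemma bdf2_inner1 (a b c : E) :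
    ⟪a, 3 • a - 4 • b + c⟫ =
      (1/2) * ‖a‖ ^ 2 + ((1/2) * ‖2 • a - b‖ ^ 2 + ((1/2) * ‖a - 2 • b + c‖ ^ 2 +
        ((-(1/2)) * ‖b‖ ^ 2 + (-(1/2)) * ‖2 • b - c‖ ^ 2))) := by
  simp only [← real_inner_self_eq_norm_sq, ← Nat.cast_smul_eq_nsmul ℝ]
  simp only [inner_add_left, inner_add_right, inner_sub_left, inner_sub_right,
    real_inner_smul_left, real_inner_smul_right]
  rw [real_inner_comm b a, real_inner_comm c a, real_inner_comm c b]
  ring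

lemma bdf2_inner2 (a b c : E) :
    ⟪a, 3 • a - 4 • b + c⟫ - 2 * ⟪b, 3 • a - 4 • b + c⟫ + ⟪c, 3 • a - 4 • b + c⟫ =
      ‖a - b‖ ^ 2 - ‖b - c‖ ^ 2 + 2 * ‖a - 2 • b + c‖ ^ 2 := by
  simp only [← real_inner_self_eq_norm_sq, ← Nat.cast_smul_eq_nsmul ℝ]
  simp only [inner_add_left, inner_add_right, inner_sub_left, inner_sub_right,
    real_inner_smul_left, real_inner_smul_right]
  rw [real_inner_comm b a, real_inner_comm c a, real_inner_comm c b]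
  ring

set_option maxHeartbeats 2000000 in
lemma bdf2_ptwise (τ ε lam D K S1 S2 S3 S4 ξ fp fn fm tp tn tm up un um g h ρ La Lb Lc LT : ℝ)
    (hτ : τ ≠ 0) (hε : ε ≠ 0) (hK : K ≠ 0) (hρ : ρ ≠ 0)
    (hi : (3 * fm - 4 * fn + fp) / (2 * τ)
        = (1 / ρ) * (um - (S3 / ε ^ 2) * (fm - 2 * fn + fp) + S4 * (La - 2 * Lb + Lc)))
    (hii : um = -(ξ * g) + S1 * La - (S2 / ε ^ 2) * fm - ξ * (lam / ε) * h * (2 * tn - tp))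
    (hiii : (3 * tm - 4 * tn + tp) / (2 * τ)
        = D * LT + ξ * K * h * (1 / ρ) * (2 * un - up)) :
    2 * τ * (ρ * ((3 * fm - 4 * fn + fp) / (2 * τ)) ^ 2) =
      -(2*τ*ξ) * (g * (3 * fm - 4 * fn + fp) / (2 * τ)) + ((S1 + S4) * (La * (3 * fm - 4 * fn + fp)) + ((-(2*S4)) * (Lb * (3 * fm - 4 * fn + fp)) + (S4 * (Lc * (3 * fm - 4 * fn + fp)) + ((-(S2/(2*ε^2))) * ((fm) ^ 2) + ((-(S2/(2*ε^2))) * ((2 * fm - fn) ^ 2) + ((S2/(2*ε^2)) * ((fn) ^ 2) + ((S2/(2*ε^2)) * ((2 * fn - fp) ^ 2) + ((-(S3/ε^2)) * ((fm - fn) ^ 2) + ((S3/ε^2) * ((fn - fp) ^ 2) + ((-(S2/(2*ε^2) + 2*S3/ε^2)) * ((fm - 2 * fn + fp) ^ 2) + ((-(lam/(2*ε*K))) * ((tm) ^ 2) + ((-(lam/(2*ε*K))) * ((2 * tm - tn) ^ 2) + ((lam/(2*ε*K)) * ((tn) ^ 2) + ((lam/(2*ε*K)) * ((2 * tn - tp)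 ^ 2) + ((-(lam/(2*ε*K))) * ((tm - 2 * tn + tp) ^ 2) + ((2*τ*lam*D/(ε*K)) * (LT * tm) + ((2*τ*ξ*lam/ε) * (h * (1 / ρ) * ((2 * un - up) * tm - um * (2 * tn - tp))) + ((2*τ*ξ*lam/ε) * (h * (1 / ρ) * (2 * tn - tp) * ((S3 / ε ^ 2) * (fm - 2 * fn + fp) - S4 * (La - 2 * Lb + Lc))))))))))))))))))))) := by
  linear_combination (norm := (field_simp; ring))
    (ρ * (3 * fm - 4 * fn + fp) - 2 * τ * ξ * (lam / ε) * h * (2 * tn - tp)) * hi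
    + (3 * fm - 4 * fn + fp) * hii
    + (2 * τ * (lam / (ε * K)) * tm) * hiii

end Aux

set_option maxHeartbeats 4000000 in
/-- **Discrete energy law for the second-order BDF2 scheme (Theorem 4.1).**
`φp, Tp, μp, Rp` are the solution at time level `n−1`; `φn, Tn, μn, Rn` at level `n`;
`φm, Tm, μm, Rm` at level `n+1`; `gb = g(φ̄)`, `hb = h′(φ̄)`, `ρb = ϱ(φ̄)` for the
extrapolation `φ̄ = 2φⁿ − φ^{n−1}`; `e = E₁(φ̄) > 0`, `ξ = R^{n+1}/√e`;
the extrapolations `T̄ = 2Tⁿ − T^{n−1}`, `μ̄ = 2μⁿ − μ^{n−1}` are written out in full. -/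
theorem second_order_discrete_energy_law
    (Ω : Set Plane) (hΩ : MeasurableSet Ω)
    (τ ε lam D K S1 S2 S3 S4 : ℝ)
    (hτ : 0 < τ) (hε : 0 < ε) (hlam : 0 < lam) (hD : 0 < D) (hK : 0 < K)
    (φp φn φm Tp Tn Tm : Plane → ℝ)
    (hφp : ContDiff ℝ 2 φp) (hφn : ContDiff ℝ 2 φn) (hφm : ContDiff ℝ 2 φm)
    (hTp : ContDiff ℝ 2 Tp) (hTn : ContDiff ℝ 2 Tn) (hTm : ContDiff ℝ 2 Tm)
    (μp μn μm gb hb ρb : Plane → ℝ) (hρb : ∀ x ∈ Ω, 0 < ρb x)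
    (e : ℝ) (he : 0 < e) (Rp Rn Rm ξ : ℝ) (hξ : ξ = Rm / Real.sqrt e)
    -- every integrand appearing is assumed integrable over Ω:
    (hIa1 : IntegrableOn (fun x => ‖gradient φm x‖ ^ 2) Ω)
    (hIa2 : IntegrableOn (fun x => ‖2 • gradient φm x - gradient φn x‖ ^ 2) Ω)
    (hIa3 : IntegrableOn (fun x => (φm x) ^ 2) Ω)
    (hIa4 : IntegrableOn (fun x => (2 * φm x - φn x) ^ 2) Ω)
    (hIa5 : IntegrableOn (fun x => (φm x - φn x) ^ 2) Ω)
    (hIa6 : IntegrableOn (fun x => ‖gradient φm x - gradient φn x‖ ^ 2) Ω)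
    (hIa7 : IntegrableOn (fun x => (Tm x) ^ 2) Ω)
    (hIa8 : IntegrableOn (fun x => (2 * Tm x - Tn x) ^ 2) Ω)
    (hIb1 : IntegrableOn (fun x => ‖gradient φn x‖ ^ 2) Ω)
    (hIb2 : IntegrableOn (fun x => ‖2 • gradient φn x - gradient φp x‖ ^ 2) Ω)
    (hIb3 : IntegrableOn (fun x => (φn x) ^ 2) Ω)
    (hIb4 : IntegrableOn (fun x => (2 * φn x - φp x) ^ 2) Ω)
    (hIb5 : IntegrableOn (fun x => (φn x - φp x) ^ 2) Ω)
    (hIb6 : IntegrableOn (fun x => ‖gradient φn x - gradient φp x‖ ^ 2) Ω)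
    (hIb7 : IntegrableOn (fun x => (Tn x) ^ 2) Ω)
    (hIb8 : IntegrableOn (fun x => (2 * Tn x - Tp x) ^ 2) Ω)
    (hIq1 : IntegrableOn (fun x => ‖gradient φm x - 2 • gradient φn x + gradient φp x‖ ^ 2) Ω)
    (hIq2 : IntegrableOn (fun x => (φm x - 2 * φn x + φp x) ^ 2) Ω)
    (hIq3 : IntegrableOn (fun x => (Tm x - 2 * Tn x + Tp x) ^ 2) Ω)
    (hId1 : IntegrableOn (fun x => ρb x * ((3 * φm x - 4 * φn x + φp x) / (2 * τ)) ^ 2) Ω)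
    (hId2 : IntegrableOn (fun x => ‖gradient Tm x‖ ^ 2) Ω)
    (hIr1 : IntegrableOn (fun x => gb x * (3 * φm x - 4 * φn x + φp x) / (2 * τ)) Ω)
    (hIr2 : IntegrableOn (fun x => hb x * (1 / ρb x) *
        ((2 * μn x - μp x) * Tm x - μm x * (2 * Tn x - Tp x))) Ω)
    (hIr3 : IntegrableOn (fun x => hb x * (1 / ρb x) * (2 * Tn x - Tp x) *
        ((S3 / ε ^ 2) * (φm x - 2 * φn x + φp x)
          - S4 * (lap φm x - 2 * lap φn x + lap φp x))) Ω)
    (hIp1 : IntegrableOn (fun x => lap φm x * (3 * φm x - 4 * φn x + φp x)) Ω)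
    (hIp2 : IntegrableOn
      (fun x => ⟪gradient φm x, 3 • gradient φm x - 4 • gradient φn x + gradient φp x⟫) Ω)
    (hIp3 : IntegrableOn (fun x => lap φn x * (3 * φm x - 4 * φn x + φp x)) Ω)
    (hIp4 : IntegrableOn
      (fun x => ⟪gradient φn x, 3 • gradient φm x - 4 • gradient φn x + gradient φp x⟫) Ω)
    (hIp5 : IntegrableOn (fun x => lap φp x * (3 * φm x - 4 * φn x + φp x)) Ω)
    (hIp6 : IntegrableOn
      (fun x => ⟪gradient φp x, 3 • gradient φm x - 4 • gradient φn x + gradient φp x⟫) Ω)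
    (hIp7 : IntegrableOn (fun x => lap Tm x * Tm x) Ω)
    -- (i) the phase-field update:
    (hi : ∀ x ∈ Ω, (3 * φm x - 4 * φn x + φp x) / (2 * τ)
        = (1 / ρb x) * (μm x - (S3 / ε ^ 2) * (φm x - 2 * φn x + φp x)
            + S4 * (lap φm x - 2 * lap φn x + lap φp x)))
    -- (ii) the chemical potential:
    (hii : ∀ x ∈ Ω, μm x
        = -(ξ * gb x) + S1 * lap φm x - (S2 / ε ^ 2) * φm x
            - ξ * (lam / ε) * hb x * (2 * Tn x - Tp x))
    -- (iii) the temperature update: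
    (hiii : ∀ x ∈ Ω, (3 * Tm x - 4 * Tn x + Tp x) / (2 * τ)
        = D * lap Tm x + ξ * K * hb x * (1 / ρb x) * (2 * μn x - μp x))
    -- (iv) the scalar auxiliary-variable equation:
    (hiv : (3 * Rm - 4 * Rn + Rp) / (2 * τ)
        = (1 / (2 * Real.sqrt e)) *
            ((∫ x in Ω, gb x * (3 * φm x - 4 * φn x + φp x) / (2 * τ))
              - (lam / ε) * (∫ x in Ω, hb x * (1 / ρb x) *
                  ((2 * μn x - μp x) * Tm x - μm x * (2 * Tn x - Tp x)))
              - (lam / ε) * (∫ x in Ω, hb x * (1 / ρb x) * (2 * Tn x - Tp x) *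
                  ((S3 / ε ^ 2) * (φm x - 2 * φn x + φp x)
                    - S4 * (lap φm x - 2 * lap φn x + lap φp x)))))
    -- (v) integration by parts identities:
    (hibp1 : (∫ x in Ω, lap φm x * (3 * φm x - 4 * φn x + φp x))
        = -∫ x in Ω, ⟪gradient φm x, 3 • gradient φm x - 4 • gradient φn x + gradient φp x⟫)
    (hibp2 : (∫ x in Ω, lap φn x * (3 * φm x - 4 * φn x + φp x))
        = -∫ x in Ω, ⟪gradient φn x, 3 • gradient φm x - 4 • gradient φn x + gradient φp x⟫)
    (hibp3 : (∫ x in Ω, lap φp x * (3 * φm x - 4 * φn x + φp x))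
        = -∫ x in Ω, ⟪gradient φp x, 3 • gradient φm x - 4 • gradient φn x + gradient φp x⟫)
    (hibp4 : (∫ x in Ω, lap Tm x * Tm x) = -∫ x in Ω, ‖gradient Tm x‖ ^ 2) :
    -- conclusion: E^{n+1} − E^n = −Q − τ·(dissipation)
    (1 / 4) * (S1 * ((∫ x in Ω, ‖gradient φm x‖ ^ 2)
            + ∫ x in Ω, ‖2 • gradient φm x - gradient φn x‖ ^ 2)
        + (S2 / ε ^ 2) * ((∫ x in Ω, (φm x) ^ 2) + ∫ x in Ω, (2 * φm x - φn x) ^ 2)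
        + (2 * S3 / ε ^ 2) * (∫ x in Ω, (φm x - φn x) ^ 2)
        + 2 * S4 * (∫ x in Ω, ‖gradient φm x - gradient φn x‖ ^ 2)
        + (lam / (ε * K)) * ((∫ x in Ω, (Tm x) ^ 2) + ∫ x in Ω, (2 * Tm x - Tn x) ^ 2)
        + 2 * (Rm ^ 2 + (2 * Rm - Rn) ^ 2))
      - (1 / 4) * (S1 * ((∫ x in Ω, ‖gradient φn x‖ ^ 2)
            + ∫ x in Ω, ‖2 • gradient φn x - gradient φp x‖ ^ 2)
        + (S2 / ε ^ 2) * ((∫ x in Ω, (φn x) ^ 2) + ∫ x in Ω, (2 * φn x - φp x) ^ 2)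
        + (2 * S3 / ε ^ 2) * (∫ x in Ω, (φn x - φp x) ^ 2)
        + 2 * S4 * (∫ x in Ω, ‖gradient φn x - gradient φp x‖ ^ 2)
        + (lam / (ε * K)) * ((∫ x in Ω, (Tn x) ^ 2) + ∫ x in Ω, (2 * Tn x - Tp x) ^ 2)
        + 2 * (Rn ^ 2 + (2 * Rn - Rp) ^ 2))
    = -(((S1 + 4 * S4) / 4) *
            (∫ x in Ω, ‖gradient φm x - 2 • gradient φn x + gradient φp x‖ ^ 2)
          + ((S2 + 4 * S3) / (4 * ε ^ 2)) * (∫ x in Ω, (φm x - 2 * φn x + φp x) ^ 2)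
          + (lam / (4 * ε * K)) * (∫ x in Ω, (Tm x - 2 * Tn x + Tp x) ^ 2)
          + (1 / 2) * (Rm - 2 * Rn + Rp) ^ 2)
        - τ * ((∫ x in Ω, ρb x * ((3 * φm x - 4 * φn x + φp x) / (2 * τ)) ^ 2)
          + (lam * D / (ε * K)) * ∫ x in Ω, ‖gradient Tm x‖ ^ 2) := by
  have hτ' : τ ≠ 0 := hτ.ne'
  have hε' : ε ≠ 0 := hε.ne'
  have hK' : K ≠ 0 := hK.ne'
  have hse : Real.sqrt e ≠ 0 := (Real.sqrt_pos.mpr he).ne'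
  have i1 : Integrable (fun x => -(2*τ*ξ) * (gb x * (3 * φm x - 4 * φn x + φp x) / (2 * τ))) (volume.restrict Ω) := Integrable.const_mul hIr1 _
  have i2 : Integrable (fun x => (S1 + S4) * (lap φm x * (3 * φm x - 4 * φn x + φp x))) (volume.restrict Ω) := Integrable.const_mul hIp1 _
  have i3 : Integrable (fun x => (-(2*S4)) * (lap φn x * (3 * φm x - 4 * φn x + φp x))) (volume.restrict Ω) := Integrable.const_mul hIp3 _
  have i4 : Integrable (fun x => S4 * (lap φp x * (3 * φm x - 4 * φn x + φp x))) (volume.restrict Ω) := Integrable.const_mul hIp5 _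
  have i5 : Integrable (fun x => (-(S2/(2*ε^2))) * ((φm x) ^ 2)) (volume.restrict Ω) := Integrable.const_mul hIa3 _
  have i6 : Integrable (fun x => (-(S2/(2*ε^2))) * ((2 * φm x - φn x) ^ 2)) (volume.restrict Ω) := Integrable.const_mul hIa4 _
  have i7 : Integrable (fun x => (S2/(2*ε^2)) * ((φn x) ^ 2)) (volume.restrict Ω) := Integrable.const_mul hIb3 _
  have i8 : Integrable (fun x => (S2/(2*ε^2)) * ((2 * φn x - φp x) ^ 2)) (volume.restrict Ω) := Integrable.const_mul hIb4 _
  have i9 : Integrable (fun x => (-(S3/ε^2)) * ((φm x - φn x) ^ 2)) (volume.restrict Ω) := Integrable.const_mul hIa5 _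
  have i10 : Integrable (fun x => (S3/ε^2) * ((φn x - φp x) ^ 2)) (volume.restrict Ω) := Integrable.const_mul hIb5 _
  have i11 : Integrable (fun x => (-(S2/(2*ε^2) + 2*S3/ε^2)) * ((φm x - 2 * φn x + φp x) ^ 2)) (volume.restrict Ω) := Integrable.const_mul hIq2 _
  have i12 : Integrable (fun x => (-(lam/(2*ε*K))) * ((Tm x) ^ 2)) (volume.restrict Ω) := Integrable.const_mul hIa7 _
  have i13 : Integrable (fun x => (-(lam/(2*ε*K))) * ((2 * Tm x - Tn x) ^ 2)) (volume.restrict Ω) := Integrable.const_mul hIa8 _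
  have i14 : Integrable (fun x => (lam/(2*ε*K)) * ((Tn x) ^ 2)) (volume.restrict Ω) := Integrable.const_mul hIb7 _
  have i15 : Integrable (fun x => (lam/(2*ε*K)) * ((2 * Tn x - Tp x) ^ 2)) (volume.restrict Ω) := Integrable.const_mul hIb8 _
  have i16 : Integrable (fun x => (-(lam/(2*ε*K))) * ((Tm x - 2 * Tn x + Tp x) ^ 2)) (volume.restrict Ω) := Integrable.const_mul hIq3 _
  have i17 : Integrable (fun x => (2*τ*lam*D/(ε*K)) * (lap Tm x * Tm x)) (volume.restrict Ω) := Integrable.const_mul hIp7 _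
  have i18 : Integrable (fun x => (2*τ*ξ*lam/ε) * (hb x * (1 / ρb x) * ((2 * μn x - μp x) * Tm x - μm x * (2 * Tn x - Tp x)))) (volume.restrict Ω) := Integrable.const_mul hIr2 _
  have i19 : Integrable (fun x => (2*τ*ξ*lam/ε) * (hb x * (1 / ρb x) * (2 * Tn x - Tp x) * ((S3 / ε ^ 2) * (φm x - 2 * φn x + φp x) - S4 * (lap φm x - 2 * lap φn x + lap φp x)))) (volume.restrict Ω) := Integrable.const_mul hIr3 _
  have s19 := i19
  have s18 : Integrable (fun x => (2*τ*ξ*lam/ε) * (hb x * (1 / ρb x) * ((2 * μn x - μp x) * Tm x - μm x * (2 * Tn x - Tp x))) + ((2*τ*ξ*lam/ε) * (hb x * (1 / ρb x) * (2 * Tn x - Tp x) * ((S3 / ε ^ 2) * (φm x - 2 * φn x + φp x) - S4 * (lap φm x - 2 * lap φn x + lap φp x))))) (volume.restrict Ω) := Integrable.add i18 s19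
  have s17 : Integrable (fun x => (2*τ*lam*D/(ε*K)) * (lap Tm x * Tm x) + ((2*τ*ξ*lam/ε) * (hb x * (1 / ρb x) * ((2 * μn x - μp x) * Tm x - μm x * (2 * Tn x - Tp x))) + ((2*τ*ξ*lam/ε) * (hb x * (1 / ρb x) * (2 * Tn x - Tp x) * ((S3 / ε ^ 2) * (φm x - 2 * φn x + φp x) - S4 * (lap φm x - 2 * lap φn x + lap φp x)))))) (volume.restrict Ω) := Integrable.add i17 s18
  have s16 : Integrable (fun x => (-(lam/(2*ε*K))) * ((Tm x - 2 * Tn x + Tp x) ^ 2) + ((2*τ*lam*D/(ε*K)) * (lap Tm x * Tm x) + ((2*τ*ξ*lam/ε) * (hb x * (1 / ρb x) * ((2 * μn x - μp x) * Tm x - μm x * (2 * Tn x - Tp x))) + ((2*τ*ξ*lam/ε) * (hb x * (1 / ρb x) * (2 * Tn x - Tp x) * ((S3 / ε ^ 2) * (φm x - 2 * φn x + φp x) - S4 * (lap φm x - 2 * lap φn x + lap φp x))))))) (volume.restrict Ω) := Integrable.add i16 s17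
  have s15 : Integrable (fun x => (lam/(2*ε*K)) * ((2 * Tn x - Tp x) ^ 2) + ((-(lam/(2*ε*K))) * ((Tm x - 2 * Tn x + Tp x) ^ 2) + ((2*τ*lam*D/(ε*K)) * (lap Tm x * Tm x) + ((2*τ*ξ*lam/ε) * (hb x * (1 / ρb x) * ((2 * μn x - μp x) * Tm x - μm x * (2 * Tn x - Tp x))) + ((2*τ*ξ*lam/ε) * (hb x * (1 / ρb x) * (2 * Tn x - Tp x) * ((S3 / ε ^ 2) * (φm x - 2 * φn x + φp x) - S4 * (lap φm x - 2 * lap φn x + lap φp x)))))))) (volume.restrict Ω) := Integrable.add i15 s16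
  have s14 : Integrable (fun x => (lam/(2*ε*K)) * ((Tn x) ^ 2) + ((lam/(2*ε*K)) * ((2 * Tn x - Tp x) ^ 2) + ((-(lam/(2*ε*K))) * ((Tm x - 2 * Tn x + Tp x) ^ 2) + ((2*τ*lam*D/(ε*K)) * (lap Tm x * Tm x) + ((2*τ*ξ*lam/ε) * (hb x * (1 / ρb x) * ((2 * μn x - μp x) * Tm x - μm x * (2 * Tn x - Tp x))) + ((2*τ*ξ*lam/ε) * (hb x * (1 / ρb x) * (2 * Tn x - Tp x) * ((S3 / ε ^ 2) * (φm x - 2 * φn x + φp x) - S4 * (lap φm x - 2 * lap φn x + lap φp x))))))))) (volume.restrict Ω) := Integrable.add i14 s15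
  have s13 : Integrable (fun x => (-(lam/(2*ε*K))) * ((2 * Tm x - Tn x) ^ 2) + ((lam/(2*ε*K)) * ((Tn x) ^ 2) + ((lam/(2*ε*K)) * ((2 * Tn x - Tp x) ^ 2) + ((-(lam/(2*ε*K))) * ((Tm x - 2 * Tn x + Tp x) ^ 2) + ((2*τ*lam*D/(ε*K)) * (lap Tm x * Tm x) + ((2*τ*ξ*lam/ε) * (hb x * (1 / ρb x) * ((2 * μn x - μp x) * Tm x - μm x * (2 * Tn x - Tp x))) + ((2*τ*ξ*lam/ε) * (hb x * (1 / ρb x) * (2 * Tn x - Tp x) * ((S3 / ε ^ 2) * (φm x - 2 * φn x + φp x) - S4 * (lap φm x - 2 * lap φn x + lap φp x)))))))))) (volume.restrict Ω) := Integrable.add i13 s14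
  have s12 : Integrable (fun x => (-(lam/(2*ε*K))) * ((Tm x) ^ 2) + ((-(lam/(2*ε*K))) * ((2 * Tm x - Tn x) ^ 2) + ((lam/(2*ε*K)) * ((Tn x) ^ 2) + ((lam/(2*ε*K)) * ((2 * Tn x - Tp x) ^ 2) + ((-(lam/(2*ε*K))) * ((Tm x - 2 * Tn x + Tp x) ^ 2) + ((2*τ*lam*D/(ε*K)) * (lap Tm x * Tm x) + ((2*τ*ξ*lam/ε) * (hb x * (1 / ρb x) * ((2 * μn x - μp x) * Tm x - μm x * (2 * Tn x - Tp x))) + ((2*τ*ξ*lam/ε) * (hb x * (1 / ρb x) * (2 * Tn x - Tp x) * ((S3 / ε ^ 2) * (φm x - 2 * φn x + φp x) - S4 * (lap φm x - 2 * lap φn x + lap φp x))))))))))) (volume.restrict Ω) := Integrable.add i12 s13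
  have s11 : Integrable (fun x => (-(S2/(2*ε^2) + 2*S3/ε^2)) * ((φm x - 2 * φn x + φp x) ^ 2) + ((-(lam/(2*ε*K))) * ((Tm x) ^ 2) + ((-(lam/(2*ε*K))) * ((2 * Tm x - Tn x) ^ 2) + ((lam/(2*ε*K)) * ((Tn x) ^ 2) + ((lam/(2*ε*K)) * ((2 * Tn x - Tp x) ^ 2) + ((-(lam/(2*ε*K))) * ((Tm x - 2 * Tn x + Tp x) ^ 2) + ((2*τ*lam*D/(ε*K)) * (lap Tm x * Tm x) + ((2*τ*ξ*lam/ε) * (hb x * (1 / ρb x) * ((2 * μn x - μp x) * Tm x - μm x * (2 * Tn x - Tp x))) + ((2*τ*ξ*lam/ε) * (hb x * (1 / ρb x) * (2 * Tn x - Tp x) * ((S3 / ε ^ 2) * (φm x - 2 * φn x + φp x) - S4 * (lap φm x - 2 * lap φn x + lap φp x)))))))))))) (volume.restrict Ω) := Integrable.add i11 s12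
  have s10 : Integrable (fun x => (S3/ε^2) * ((φn x - φp x) ^ 2) + ((-(S2/(2*ε^2) + 2*S3/ε^2)) * ((φm x - 2 * φn x + φp x) ^ 2) + ((-(lam/(2*ε*K))) * ((Tm x) ^ 2) + ((-(lam/(2*ε*K))) * ((2 * Tm x - Tn x) ^ 2) + ((lam/(2*ε*K)) * ((Tn x) ^ 2) + ((lam/(2*ε*K)) * ((2 * Tn x - Tp x) ^ 2) + ((-(lam/(2*ε*K))) * ((Tm x - 2 * Tn x + Tp x) ^ 2) + ((2*τ*lam*D/(ε*K)) * (lap Tm x * Tm x) + ((2*τ*ξ*lam/ε) * (hb x * (1 / ρb x) * ((2 * μn x - μp x) * Tm x - μm x * (2 * Tn x - Tp x))) + ((2*τ*ξ*lam/ε) * (hb x * (1 / ρb x) * (2 * Tn x - Tp x) * ((S3 / ε ^ 2) * (φm x - 2 * φn x + φp x) - S4 * (lap φm x - 2 * lap φn x + lap φp x))))))))))))) (volume.restrict Ω) := Integrable.add i10 s11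
  have s9 : Integrable (fun x => (-(S3/ε^2)) * ((φm x - φn x) ^ 2) + ((S3/ε^2) * ((φn x - φp x) ^ 2) + ((-(S2/(2*ε^2) + 2*S3/ε^2)) * ((φm x - 2 * φn x + φp x) ^ 2) + ((-(lam/(2*ε*K))) * ((Tm x) ^ 2) + ((-(lam/(2*ε*K))) * ((2 * Tm x - Tn x) ^ 2) + ((lam/(2*ε*K)) * ((Tn x) ^ 2) + ((lam/(2*ε*K)) * ((2 * Tn x - Tp x) ^ 2) + ((-(lam/(2*ε*K))) * ((Tm x - 2 * Tn x + Tp x) ^ 2) + ((2*τ*lam*D/(ε*K)) * (lap Tm x * Tm x) + ((2*τ*ξ*lam/ε) * (hb x * (1 / ρb x) * ((2 * μn x - μp x) * Tm x - μm x * (2 * Tn x - Tp x))) + ((2*τ*ξ*lam/ε) * (hb x * (1 / ρb x) * (2 * Tn x - Tp x) * ((S3 / ε ^ 2) * (φm x - 2 * φn x + φp x) - S4 * (lap φm x - 2 * lap φn x + lap φp x)))))))))))))) (volume.restrict Ω) := Integrable.add i9 s10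
  have s8 : Integrable (fun x => (S2/(2*ε^2)) * ((2 * φn x - φp x) ^ 2) + ((-(S3/ε^2)) * ((φm x - φn x) ^ 2) + ((S3/ε^2) * ((φn x - φp x) ^ 2) + ((-(S2/(2*ε^2) + 2*S3/ε^2)) * ((φm x - 2 * φn x + φp x) ^ 2) + ((-(lam/(2*ε*K))) * ((Tm x) ^ 2) + ((-(lam/(2*ε*K))) * ((2 * Tm x - Tn x) ^ 2) + ((lam/(2*ε*K)) * ((Tn x) ^ 2) + ((lam/(2*ε*K)) * ((2 * Tn x - Tp x) ^ 2) + ((-(lam/(2*ε*K))) * ((Tm x - 2 * Tn x + Tp x) ^ 2) + ((2*τ*lam*D/(ε*K)) * (lap Tm x * Tm x) + ((2*τ*ξ*lam/ε) * (hb x * (1 / ρb x) * ((2 * μn x - μp x) * Tm x - μm x * (2 * Tn x - Tp x))) + ((2*τ*ξ*lam/ε) * (hb x * (1 / ρb x) * (2 * Tn x - Tp x) * ((S3 / ε ^ 2) * (φm x - 2 * φn x + φp x) - S4 * (lap φm x - 2 * lap φn x + lap φp x))))))))))))))) (volume.restrict Ω) := Integrable.add i8 s9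
  have s7 : Integrable (fun x => (S2/(2*ε^2)) * ((φn x) ^ 2) + ((S2/(2*ε^2)) * ((2 * φn x - φp x) ^ 2) + ((-(S3/ε^2)) * ((φm x - φn x) ^ 2) + ((S3/ε^2) * ((φn x - φp x) ^ 2) + ((-(S2/(2*ε^2) + 2*S3/ε^2)) * ((φm x - 2 * φn x + φp x) ^ 2) + ((-(lam/(2*ε*K))) * ((Tm x) ^ 2) + ((-(lam/(2*ε*K))) * ((2 * Tm x - Tn x) ^ 2) + ((lam/(2*ε*K)) * ((Tn x) ^ 2) + ((lam/(2*ε*K)) * ((2 * Tn x - Tp x) ^ 2) + ((-(lam/(2*ε*K))) * ((Tm x - 2 * Tn x + Tp x) ^ 2) + ((2*τ*lam*D/(ε*K)) * (lap Tm x * Tm x) + ((2*τ*ξ*lam/ε) * (hb x * (1 / ρb x) * ((2 * μn x - μp x) * Tm x - μm x * (2 * Tn x - Tp x))) + ((2*τ*ξ*lam/ε) * (hb x * (1 / ρb x) * (2 * Tn x - Tp x) * ((S3 / ε ^ 2) * (φm x - 2 * φn x + φp x) - S4 * (lap φm x - 2 * lap φn x + lap φp x)))))))))))))))) (volume.restrict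 Ω) := Integrable.add i7 s8
  have s6 : Integrable (fun x => (-(S2/(2*ε^2))) * ((2 * φm x - φn x) ^ 2) + ((S2/(2*ε^2)) * ((φn x) ^ 2) + ((S2/(2*ε^2)) * ((2 * φn x - φp x) ^ 2) + ((-(S3/ε^2)) * ((φm x - φn x) ^ 2) + ((S3/ε^2) * ((φn x - φp x) ^ 2) + ((-(S2/(2*ε^2) + 2*S3/ε^2)) * ((φm x - 2 * φn x + φp x) ^ 2) + ((-(lam/(2*ε*K))) * ((Tm x) ^ 2) + ((-(lam/(2*ε*K))) * ((2 * Tm x - Tn x) ^ 2) + ((lam/(2*ε*K)) * ((Tn x) ^ 2) + ((lam/(2*ε*K)) * ((2 * Tn x - Tp x) ^ 2) + ((-(lam/(2*ε*K))) * ((Tm x - 2 * Tn x + Tp x) ^ 2) + ((2*τ*lam*D/(ε*K)) * (lap Tm x * Tm x) + ((2*τ*ξ*lam/ε) * (hb x * (1 / ρb x) * ((2 * μn x - μp x) * Tm x - μm x * (2 * Tn x - Tp x))) + ((2*τ*ξ*lam/ε) * (hb x * (1 / ρb x) * (2 * Tn x - Tp x) * ((S3 / ε ^ 2) * (φm x -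 2 * φn x + φp x) - S4 * (lap φm x - 2 * lap φn x + lap φp x))))))))))))))))) (volume.restrict Ω) := Integrable.add i6 s7
  have s5 : Integrable (fun x => (-(S2/(2*ε^2))) * ((φm x) ^ 2) + ((-(S2/(2*ε^2))) * ((2 * φm x - φn x) ^ 2) + ((S2/(2*ε^2)) * ((φn x) ^ 2) + ((S2/(2*ε^2)) * ((2 * φn x - φp x) ^ 2) + ((-(S3/ε^2)) * ((φm x - φn x) ^ 2) + ((S3/ε^2) * ((φn x - φp x) ^ 2) + ((-(S2/(2*ε^2) + 2*S3/ε^2)) * ((φm x - 2 * φn x + φp x) ^ 2) + ((-(lam/(2*ε*K))) * ((Tm x) ^ 2) + ((-(lam/(2*ε*K))) * ((2 * Tm x - Tn x) ^ 2) + ((lam/(2*ε*K)) * ((Tn x) ^ 2) + ((lam/(2*ε*K)) * ((2 * Tn x - Tp x) ^ 2) + ((-(lam/(2*ε*K))) * ((Tm x - 2 * Tn x + Tp x) ^ 2) + ((2*τ*lam*D/(ε*K)) * (lap Tm x * Tm x) + ((2*τ*ξ*lam/ε) * (hb x * (1 / ρb x) * ((2 * μn x - μp x) * Tm x - μm x *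 (2 * Tn x - Tp x))) + ((2*τ*ξ*lam/ε) * (hb x * (1 / ρb x) * (2 * Tn x - Tp x) * ((S3 / ε ^ 2) * (φm x - 2 * φn x + φp x) - S4 * (lap φm x - 2 * lap φn x + lap φp x)))))))))))))))))) (volume.restrict Ω) := Integrable.add i5 s6
  have s4 : Integrable (fun x => S4 * (lap φp x * (3 * φm x - 4 * φn x + φp x)) + ((-(S2/(2*ε^2))) * ((φm x) ^ 2) + ((-(S2/(2*ε^2))) * ((2 * φm x - φn x) ^ 2) + ((S2/(2*ε^2)) * ((φn x) ^ 2) + ((S2/(2*ε^2)) * ((2 * φn x - φp x) ^ 2) + ((-(S3/ε^2)) * ((φm x - φn x) ^ 2) + ((S3/ε^2) * ((φn x - φp x) ^ 2) + ((-(S2/(2*ε^2) + 2*S3/ε^2)) * ((φm x - 2 * φn x + φp x) ^ 2) + ((-(lam/(2*ε*K))) * ((Tm x) ^ 2) + ((-(lam/(2*ε*K))) * ((2 * Tm x - Tn x) ^ 2) + ((lam/(2*ε*K)) * ((Tn x) ^ 2) + ((lam/(2*ε*K)) * ((2 * Tn x - Tp x) ^ 2) + ((-(lam/(2*ε*K)))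 * ((Tm x - 2 * Tn x + Tp x) ^ 2) + ((2*τ*lam*D/(ε*K)) * (lap Tm x * Tm x) + ((2*τ*ξ*lam/ε) * (hb x * (1 / ρb x) * ((2 * μn x - μp x) * Tm x - μm x * (2 * Tn x - Tp x))) + ((2*τ*ξ*lam/ε) * (hb x * (1 / ρb x) * (2 * Tn x - Tp x) * ((S3 / ε ^ 2) * (φm x - 2 * φn x + φp x) - S4 * (lap φm x - 2 * lap φn x + lap φp x))))))))))))))))))) (volume.restrict Ω) := Integrable.add i4 s5
  have s3 : Integrable (fun x => (-(2*S4)) * (lap φn x * (3 * φm x - 4 * φn x + φp x)) + (S4 * (lap φp x * (3 * φm x - 4 * φn x + φp x)) + ((-(S2/(2*ε^2))) * ((φm x) ^ 2) + ((-(S2/(2*ε^2))) * ((2 * φm x - φn x) ^ 2) + ((S2/(2*ε^2)) * ((φn x) ^ 2) + ((S2/(2*ε^2)) * ((2 * φn x - φp x) ^ 2) + ((-(S3/ε^2)) * ((φm x - φn x) ^ 2) + ((S3/ε^2) * ((φn x - φp x) ^ 2) + ((-(S2/(2*ε^2) + 2*S3/ε^2)) * ((φm x - 2 * φn x + φp x)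 ^ 2) + ((-(lam/(2*ε*K))) * ((Tm x) ^ 2) + ((-(lam/(2*ε*K))) * ((2 * Tm x - Tn x) ^ 2) + ((lam/(2*ε*K)) * ((Tn x) ^ 2) + ((lam/(2*ε*K)) * ((2 * Tn x - Tp x) ^ 2) + ((-(lam/(2*ε*K))) * ((Tm x - 2 * Tn x + Tp x) ^ 2) + ((2*τ*lam*D/(ε*K)) * (lap Tm x * Tm x) + ((2*τ*ξ*lam/ε) * (hb x * (1 / ρb x) * ((2 * μn x - μp x) * Tm x - μm x * (2 * Tn x - Tp x))) + ((2*τ*ξ*lam/ε) * (hb x * (1 / ρb x) * (2 * Tn x - Tp x) * ((S3 / ε ^ 2) * (φm x - 2 * φn x + φp x) - S4 * (lap φm x - 2 * lap φn x + lap φp x)))))))))))))))))))) (volume.restrict Ω) := Integrable.add i3 s4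
  have s2 : Integrable (fun x => (S1 + S4) * (lap φm x * (3 * φm x - 4 * φn x + φp x)) + ((-(2*S4)) * (lap φn x * (3 * φm x - 4 * φn x + φp x)) + (S4 * (lap φp x * (3 * φm x - 4 * φn x + φp x)) + ((-(S2/(2*ε^2))) * ((φm x) ^ 2) + ((-(S2/(2*ε^2))) * ((2 * φm x - φn x) ^ 2) + ((S2/(2*ε^2)) * ((φn x) ^ 2) + ((S2/(2*ε^2)) * ((2 * φn x - φp x) ^ 2) + ((-(S3/ε^2)) * ((φm x - φn x) ^ 2) + ((S3/ε^2) * ((φn x - φp x) ^ 2) + ((-(S2/(2*ε^2) + 2*S3/ε^2)) * ((φm x - 2 * φn x + φp x) ^ 2) + ((-(lam/(2*ε*K))) * ((Tm x) ^ 2) + ((-(lam/(2*ε*K))) * ((2 * Tm x - Tn x) ^ 2) + ((lam/(2*ε*K)) * ((Tn x) ^ 2) + ((lam/(2*ε*K)) * ((2 * Tn x - Tp x) ^ 2) + ((-(lam/(2*ε*K))) * ((Tm x - 2 * Tn x + Tp x) ^ 2) + ((2*τ*lam*D/(ε*K)) * (lap Tm x * Tm x) + ((2*τ*ξ*lam/ε)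 * (hb x * (1 / ρb x) * ((2 * μn x - μp x) * Tm x - μm x * (2 * Tn x - Tp x))) + ((2*τ*ξ*lam/ε) * (hb x * (1 / ρb x) * (2 * Tn x - Tp x) * ((S3 / ε ^ 2) * (φm x - 2 * φn x + φp x) - S4 * (lap φm x - 2 * lap φn x + lap φp x))))))))))))))))))))) (volume.restrict Ω) := Integrable.add i2 s3
  have s1 : Integrable (fun x => -(2*τ*ξ) * (gb x * (3 * φm x - 4 * φn x + φp x) / (2 * τ)) + ((S1 + S4) * (lap φm x * (3 * φm x - 4 * φn x + φp x)) + ((-(2*S4)) * (lap φn x * (3 * φm x - 4 * φn x + φp x)) + (S4 * (lap φp x * (3 * φm x - 4 * φn x + φp x)) + ((-(S2/(2*ε^2))) * ((φm x) ^ 2) + ((-(S2/(2*ε^2))) * ((2 * φm x - φn x) ^ 2) + ((S2/(2*ε^2)) * ((φn x) ^ 2) + ((S2/(2*ε^2)) * ((2 * φn x - φp x) ^ 2) + ((-(S3/ε^2)) * ((φm x - φn x) ^ 2) + ((S3/ε^2) * ((φn x - φp x) ^ 2) + ((-(S2/(2*ε^2) + 2*S3/ε^2)) * ((φm x - 2 *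 φn x + φp x) ^ 2) + ((-(lam/(2*ε*K))) * ((Tm x) ^ 2) + ((-(lam/(2*ε*K))) * ((2 * Tm x - Tn x) ^ 2) + ((lam/(2*ε*K)) * ((Tn x) ^ 2) + ((lam/(2*ε*K)) * ((2 * Tn x - Tp x) ^ 2) + ((-(lam/(2*ε*K))) * ((Tm x - 2 * Tn x + Tp x) ^ 2) + ((2*τ*lam*D/(ε*K)) * (lap Tm x * Tm x) + ((2*τ*ξ*lam/ε) * (hb x * (1 / ρb x) * ((2 * μn x - μp x) * Tm x - μm x * (2 * Tn x - Tp x))) + ((2*τ*ξ*lam/ε) * (hb x * (1 / ρb x) * (2 * Tn x - Tp x) * ((S3 / ε ^ 2) * (φm x - 2 * φn x + φp x) - S4 * (lap φm x - 2 * lap φn x + lap φp x)))))))))))))))))))))) (volume.restrict Ω) := Integrable.add i1 s2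
  have key : (∫ x in Ω, 2 * τ * (ρb x * ((3 * φm x - 4 * φn x + φp x) / (2 * τ)) ^ 2)) = ∫ x in Ω, (-(2*τ*ξ) * (gb x * (3 * φm x - 4 * φn x + φp x) / (2 * τ)) + ((S1 + S4) * (lap φm x * (3 * φm x - 4 * φn x + φp x)) + ((-(2*S4)) * (lap φn x * (3 * φm x - 4 * φn x + φp x)) + (S4 * (lap φp x * (3 * φm x - 4 * φn x + φp x)) + ((-(S2/(2*ε^2))) * ((φm x) ^ 2) + ((-(S2/(2*ε^2))) * ((2 * φm x - φn x) ^ 2) + ((S2/(2*ε^2)) * ((φn x) ^ 2) + ((S2/(2*ε^2)) * ((2 * φn x - φp x) ^ 2) + ((-(S3/ε^2)) * ((φm x - φn x) ^ 2) + ((S3/ε^2) * ((φn x - φp x) ^ 2) + ((-(S2/(2*ε^2) + 2*S3/ε^2)) * ((φm x - 2 * φn x + φp x) ^ 2) + ((-(lam/(2*ε*K))) * ((Tm x) ^ 2) + ((-(lam/(2*ε*K))) * ((2 * Tm x - Tn x) ^ 2) + ((lam/(2*ε*K)) * ((Tn x) ^ 2) + ((lam/(2*ε*K)) * ((2 * Tn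 x - Tp x) ^ 2) + ((-(lam/(2*ε*K))) * ((Tm x - 2 * Tn x + Tp x) ^ 2) + ((2*τ*lam*D/(ε*K)) * (lap Tm x * Tm x) + ((2*τ*ξ*lam/ε) * (hb x * (1 / ρb x) * ((2 * μn x - μp x) * Tm x - μm x * (2 * Tn x - Tp x))) + ((2*τ*ξ*lam/ε) * (hb x * (1 / ρb x) * (2 * Tn x - Tp x) * ((S3 / ε ^ 2) * (φm x - 2 * φn x + φp x) - S4 * (lap φm x - 2 * lap φn x + lap φp x)))))))))))))))))))))) := by
    refine setIntegral_congr_fun hΩ (fun x hx => ?_)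
    exact bdf2_ptwise τ ε lam D K S1 S2 S3 S4 ξ (φp x) (φn x) (φm x) (Tp x) (Tn x) (Tm x) (μp x) (μn x) (μm x) (gb x) (hb x) (ρb x) (lap φm x) (lap φn x) (lap φp x) (lap Tm x) hτ' hε' hK' (hρb x hx).ne' (hi x hx) (hii x hx) (hiii x hx)
  rw [integral_add i1 s2, integral_add i2 s3, integral_add i3 s4, integral_add i4 s5, integral_add i5 s6, integral_add i6 s7, integral_add i7 s8, integral_add i8 s9, integral_add i9 s10, integral_add i10 s11, integral_add i11 s12, integral_add i12 s13, integral_add i13 s14, integral_add i14 s15, integral_add i15 s16, integral_add i16 s17, integral_add i17 s18, integral_add i18 s19] at key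
  simp only [integral_const_mul] at key
  have jj1 : Integrable (fun x => (1/2) * ‖gradient φm x‖ ^ 2) (volume.restrict Ω) := Integrable.const_mul hIa1 _
  have jj2 : Integrable (fun x => (1/2) * ‖2 • gradient φm x - gradient φn x‖ ^ 2) (volume.restrict Ω) := Integrable.const_mul hIa2 _
  have jj3 : Integrable (fun x => (1/2) * ‖gradient φm x - 2 • gradient φn x + gradient φp x‖ ^ 2) (volume.restrict Ω) := Integrable.const_mul hIq1 _
  have jj4 : Integrable (fun x => (-(1/2)) * ‖gradient φn x‖ ^ 2) (volume.restrict Ω) := Integrable.const_mul hIb1 _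
  have jj5 : Integrable (fun x => (-(1/2)) * ‖2 • gradient φn x - gradient φp x‖ ^ 2) (volume.restrict Ω) := Integrable.const_mul hIb2 _
  have hJ1 : (∫ x in Ω, ⟪gradient φm x, 3 • gradient φm x - 4 • gradient φn x + gradient φp x⟫)
      = (1/2) * (∫ x in Ω, ‖gradient φm x‖ ^ 2) + ((1/2) * (∫ x in Ω, ‖2 • gradient φm x - gradient φn x‖ ^ 2) + ((1/2) * (∫ x in Ω, ‖gradient φm x - 2 • gradient φn x + gradient φp x‖ ^ 2) + ((-(1/2)) * (∫ x in Ω, ‖gradient φn x‖ ^ 2) + (-(1/2)) * (∫ x in Ω, ‖2 • gradient φn x - gradient φp x‖ ^ 2)))) := by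
    rw [setIntegral_congr_fun hΩ (fun x _ => bdf2_inner1 (gradient φm x) (gradient φn x) (gradient φp x))]
    have t5 := jj5
    have t4 : Integrable (fun x => (-(1/2)) * ‖gradient φn x‖ ^ 2 + ((-(1/2)) * ‖2 • gradient φn x - gradient φp x‖ ^ 2)) (volume.restrict Ω) := Integrable.add jj4 t5
    have t3 : Integrable (fun x => (1/2) * ‖gradient φm x - 2 • gradient φn x + gradient φp x‖ ^ 2 + ((-(1/2)) * ‖gradient φn x‖ ^ 2 + ((-(1/2)) * ‖2 • gradient φn x - gradient φp x‖ ^ 2))) (volume.restrict Ω) := Integrable.add jj3 t4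
    have t2 : Integrable (fun x => (1/2) * ‖2 • gradient φm x - gradient φn x‖ ^ 2 + ((1/2) * ‖gradient φm x - 2 • gradient φn x + gradient φp x‖ ^ 2 + ((-(1/2)) * ‖gradient φn x‖ ^ 2 + ((-(1/2)) * ‖2 • gradient φn x - gradient φp x‖ ^ 2)))) (volume.restrict Ω) := Integrable.add jj2 t3
    rw [integral_add jj1 t2, integral_add jj2 t3, integral_add jj3 t4, integral_add jj4 jj5]
    simp only [integral_const_mul]
  have hJ2 : (∫ x in Ω, ⟪gradient φm x, 3 • gradient φm x - 4 • gradient φn x + gradient φp x⟫)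
        - 2 * (∫ x in Ω, ⟪gradient φn x, 3 • gradient φm x - 4 • gradient φn x + gradient φp x⟫)
        + (∫ x in Ω, ⟪gradient φp x, 3 • gradient φm x - 4 • gradient φn x + gradient φp x⟫)
      = (∫ x in Ω, ‖gradient φm x - gradient φn x‖ ^ 2)
        - (∫ x in Ω, ‖gradient φn x - gradient φp x‖ ^ 2)
        + 2 * (∫ x in Ω, ‖gradient φm x - 2 • gradient φn x + gradient φp x‖ ^ 2) := by
    have u1 : Integrable (fun x => 2 * ⟪gradient φn x, 3 • gradient φm x - 4 • gradient φn x + gradient φp x⟫) (volume.restrict Ω) := Integrable.const_mul hIp4 2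
    have u2 : Integrable (fun x => ⟪gradient φm x, 3 • gradient φm x - 4 • gradient φn x + gradient φp x⟫ - 2 * ⟪gradient φn x, 3 • gradient φm x - 4 • gradient φn x + gradient φp x⟫) (volume.restrict Ω) := Integrable.sub hIp2 u1
    have u3 : Integrable (fun x => ‖gradient φm x - gradient φn x‖ ^ 2 - ‖gradient φn x - gradient φp x‖ ^ 2) (volume.restrict Ω) := Integrable.sub hIa6 hIb6
    have u4 : Integrable (fun x => 2 * ‖gradient φm x - 2 • gradient φn x + gradient φp x‖ ^ 2) (volume.restrict Ω) := Integrable.const_mul hIq1 2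
    rw [← integral_const_mul 2 (fun x => ⟪gradient φn x, 3 • gradient φm x - 4 • gradient φn x + gradient φp x⟫),
      ← integral_sub hIp2 u1,
      ← integral_add u2 hIp6,
      setIntegral_congr_fun hΩ (fun x _ => bdf2_inner2 (gradient φm x) (gradient φn x) (gradient φp x)),
      integral_add u3 u4,
      integral_sub hIa6 hIb6, integral_const_mul]
  have h1 : ξ * Real.sqrt e = Rm := by rw [hξ]; field_simp
  have hR : 2 * τ * ξ * (∫ x in Ω, gb x * (3 * φm x - 4 * φn x + φp x) / (2 * τ))
        - 2 * τ * ξ * (lam / ε) * (∫ x in Ω, hb x * (1 / ρb x) *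
            ((2 * μn x - μp x) * Tm x - μm x * (2 * Tn x - Tp x)))
        - 2 * τ * ξ * (lam / ε) * (∫ x in Ω, hb x * (1 / ρb x) * (2 * Tn x - Tp x) *
            ((S3 / ε ^ 2) * (φm x - 2 * φn x + φp x)
              - S4 * (lap φm x - 2 * lap φn x + lap φp x)))
      = Rm ^ 2 + (2 * Rm - Rn) ^ 2 + (Rm - 2 * Rn + Rp) ^ 2 - Rn ^ 2 - (2 * Rn - Rp) ^ 2 := by
    linear_combination (norm := (field_simp; ring))
      (-(4 * τ * Real.sqrt e * ξ)) * hiv + (2 * (3 * Rm - 4 * Rn + Rp)) * h1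
  linear_combination (1/2) * key + ((S1 + S4)/2) * hibp1 + (-S4) * hibp2 + (S4/2) * hibp3
    + (τ * lam * D / (ε * K)) * hibp4 + (-(S1/2)) * hJ1 + (-(S4/2)) * hJ2 + (-(1/2)) * hR
end

section
/- Unconditional energy stability of the second-order BDF2 scheme. Under the hypotheses listed in the context (the second-order scheme equations, the auxiliary-variable equation, the integration-by-parts identities, positivity of the parameters and of ϱ̄, and nonnegativity of the stabilization constants), the discrete energy E^k := (1/4)·[ S₁(∫|∇φ^k|² + ∫|2∇φ^k − ∇φ^{k−1}|²) + (S₂/ε²)(∫(φ^k)² + ∫(2φ^k − φ^{k−1})²) + (2S₃/ε²)∫(φ^k − φ^{k−1})² + 2S₄∫|∇(φ^k − φ^{k−1})|² + (λ/(εK))(∫(T^k)² + ∫(2T^k − T^{k−1})²) + 2((R^k)² + (2R^k − R^{k−1})²) ] satisfies E^{n+1} ≤ E^n. -/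
open MeasureTheory
open scoped RealInnerProductSpace


section helpers
variable {α : Type*} [MeasurableSpace α] {μ : Measure α}

lemma intV5 {f1 f2 f3 f4 f5 : α → ℝ} (h1 : Integrable f1 μ) (h2 : Integrable f2 μ)
    (h3 : Integrable f3 μ) (h4 : Integrable f4 μ) (h5 : Integrable f5 μ) :
    ∫ x, (f1 x + f2 x + f3 x - f4 x - f5 x) ∂μ
      = (∫ x, f1 x ∂μ) + (∫ x, f2 x ∂μ) + (∫ x, f3 x ∂μ) - (∫ x, f4 x ∂μ) - ∫ x, f5 x ∂μ := by
  have a1 : Integrable (fun x => f1 x + f2 x) μ := h1.add h2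
  have a2 : Integrable (fun x => f1 x + f2 x + f3 x) μ := a1.add h3
  have a3 : Integrable (fun x => f1 x + f2 x + f3 x - f4 x) μ := a2.sub h4
  rw [integral_sub a3 h5, integral_sub a2 h4, integral_add a1 h3, integral_add h1 h2]

lemma intV3c {f1 f2 f3 : α → ℝ} (h1 : Integrable f1 μ) (h2 : Integrable f2 μ)
    (h3 : Integrable f3 μ) :
    ∫ x, (f1 x + 2 * f2 x - f3 x) ∂μ
      = (∫ x, f1 x ∂μ) + 2 * (∫ x, f2 x ∂μ) - ∫ x, f3 x ∂μ := by
  have b2 : Integrable (fun x => 2 * f2 x) μ := h2.const_mul 2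
  have a1 : Integrable (fun x => f1 x + 2 * f2 x) μ := h1.add b2
  rw [integral_sub a1 h3, integral_add h1 b2, integral_const_mul _ _]

lemma intV3m {f1 f2 f3 : α → ℝ} (h1 : Integrable f1 μ) (h2 : Integrable f2 μ)
    (h3 : Integrable f3 μ) :
    ∫ x, (f1 x - 2 * f2 x + f3 x) ∂μ
      = (∫ x, f1 x ∂μ) - 2 * (∫ x, f2 x ∂μ) + ∫ x, f3 x ∂μ := by
  have b2 : Integrable (fun x => 2 * f2 x) μ := h2.const_mul 2
  have a1 : Integrable (fun x => f1 x - 2 * f2 x) μ := h1.sub b2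
  rw [integral_add a1 h3, integral_sub h1 b2, integral_const_mul _ _]

lemma intV8 {g1 g2 g3 g4 g5 g6 g7 g8 : α → ℝ} (c1 c2 c3 c4 c5 c6 c7 c8 : ℝ)
    (h1 : Integrable g1 μ) (h2 : Integrable g2 μ) (h3 : Integrable g3 μ)
    (h4 : Integrable g4 μ) (h5 : Integrable g5 μ) (h6 : Integrable g6 μ)
    (h7 : Integrable g7 μ) (h8 : Integrable g8 μ) :
    ∫ x, (c1 * g1 x + c2 * g2 x - c3 * g3 x - c4 * g4 x + c5 * g5 x + c6 * g6 x
        - c7 * g7 x + c8 * g8 x) ∂μ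
      = c1 * (∫ x, g1 x ∂μ) + c2 * (∫ x, g2 x ∂μ) - c3 * (∫ x, g3 x ∂μ) - c4 * (∫ x, g4 x ∂μ)
        + c5 * (∫ x, g5 x ∂μ) + c6 * (∫ x, g6 x ∂μ) - c7 * (∫ x, g7 x ∂μ)
        + c8 * (∫ x, g8 x ∂μ) := by
  have i1 : Integrable (fun x => c1 * g1 x) μ := h1.const_mul c1
  have i2 : Integrable (fun x => c2 * g2 x) μ := h2.const_mul c2
  have i3 : Integrable (fun x => c3 * g3 x) μ := h3.const_mul c3
  have i4 : Integrable (fun x => c4 * g4 x) μ := h4.const_mul c4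
  have i5 : Integrable (fun x => c5 * g5 x) μ := h5.const_mul c5
  have i6 : Integrable (fun x => c6 * g6 x) μ := h6.const_mul c6
  have i7 : Integrable (fun x => c7 * g7 x) μ := h7.const_mul c7
  have i8 : Integrable (fun x => c8 * g8 x) μ := h8.const_mul c8
  have a1 : Integrable (fun x => c1 * g1 x + c2 * g2 x) μ := i1.add i2
  have a2 : Integrable (fun x => c1 * g1 x + c2 * g2 x - c3 * g3 x) μ := a1.sub i3
  have a3 : Integrable (fun x => c1 * g1 x + c2 * g2 x - c3 * g3 x - c4 * g4 x) μ := a2.sub i4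
  have a4 : Integrable (fun x => c1 * g1 x + c2 * g2 x - c3 * g3 x - c4 * g4 x + c5 * g5 x) μ :=
    a3.add i5
  have a5 : Integrable (fun x => c1 * g1 x + c2 * g2 x - c3 * g3 x - c4 * g4 x + c5 * g5 x
      + c6 * g6 x) μ := a4.add i6
  have a6 : Integrable (fun x => c1 * g1 x + c2 * g2 x - c3 * g3 x - c4 * g4 x + c5 * g5 x
      + c6 * g6 x - c7 * g7 x) μ := a5.sub i7
  rw [integral_add a6 i8, integral_sub a5 i7, integral_add a4 i6, integral_add a3 i5,
    integral_sub a2 i4, integral_sub a1 i3, integral_add i1 i2,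
    integral_const_mul _ _, integral_const_mul _ _, integral_const_mul _ _, integral_const_mul _ _,
    integral_const_mul _ _, integral_const_mul _ _, integral_const_mul _ _, integral_const_mul _ _]

end helpers

section inner_helpers
variable {E : Type*} [NormedAddCommGroup E] [InnerProductSpace ℝ E]

lemma inner_bdf2 (a b c : E) :
    ⟪a, 3 • a - 4 • b + c⟫ =
      (‖a‖^2 + ‖2 • a - b‖^2 + ‖a - 2 • b + c‖^2 - ‖b‖^2 - ‖2 • b - c‖^2) / 2 := by
  simp only [← Nat.cast_smul_eq_nsmul ℝ, ← real_inner_self_eq_norm_sq, inner_add_left,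
    inner_add_right, inner_sub_left, inner_sub_right, real_inner_smul_left, real_inner_smul_right,
    real_inner_comm a b, real_inner_comm a c, real_inner_comm b c]
  push_cast
  ring

lemma inner_bdf2' (a b c : E) :
    ⟪a, 3 • a - 4 • b + c⟫ - 2 * ⟪b, 3 • a - 4 • b + c⟫ + ⟪c, 3 • a - 4 • b + c⟫ =
      ‖a - b‖^2 + 2 * ‖a - 2 • b + c‖^2 - ‖b - c‖^2 := by
  simp only [← Nat.cast_smul_eq_nsmul ℝ, ← real_inner_self_eq_norm_sq, inner_add_left,
    inner_add_right, inner_sub_left, inner_sub_right, real_inner_smul_left, real_inner_smul_right,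
    real_inner_comm a b, real_inner_comm a c, real_inner_comm b c]
  push_cast
  ring

end inner_helpers

lemma key_pointwise {τ ε lam D K S1 S2 S3 S4 ξ ρ g h φm φn φp Tm Tn Tp μm μn μp lm ln lp lT : ℝ}
    (hρ : ρ ≠ 0) (hK : K ≠ 0)
    (e1 : (3*φm - 4*φn + φp) / (2*τ)
        = (1/ρ) * (μm - S3/ε^2*(φm - 2*φn + φp) + S4*(lm - 2*ln + lp)))
    (e2 : μm = -(ξ*g) + S1*lm - S2/ε^2*φm - ξ*(lam/ε)*h*(2*Tn - Tp))
    (e3 : (3*Tm - 4*Tn + Tp)/(2*τ) = D*lT + ξ*K*h*(1/ρ)*(2*μn - μp)) :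
    ρ * ((3*φm - 4*φn + φp)/(2*τ))^2 =
      (-ξ) * (g*(3*φm - 4*φn + φp)/(2*τ))
      + (S1/(2*τ)) * (lm*(3*φm - 4*φn + φp))
      - (S2/(4*τ*ε^2)) * (φm^2 + (2*φm - φn)^2 + (φm - 2*φn + φp)^2 - φn^2 - (2*φn - φp)^2)
      - (lam/(4*τ*ε*K)) * (Tm^2 + (2*Tm - Tn)^2 + (Tm - 2*Tn + Tp)^2 - Tn^2 - (2*Tn - Tp)^2)
      + (lam*D/(ε*K)) * (lT*Tm)
      + (ξ*(lam/ε)) * (h*(1/ρ)*((2*μn - μp)*Tm - μm*(2*Tn - Tp))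
          + h*(1/ρ)*(2*Tn - Tp)*((S3/ε^2)*(φm - 2*φn + φp) - S4*(lm - 2*ln + lp)))
      - (S3/(2*τ*ε^2)) * ((φm - φn)^2 + 2*((φm - 2*φn + φp)^2) - (φn - φp)^2)
      + (S4/(2*τ)) * (lm*(3*φm - 4*φn + φp) - 2*(ln*(3*φm - 4*φn + φp))
          + lp*(3*φm - 4*φn + φp)) := by
  have E1 : ρ * ((3*φm - 4*φn + φp)/(2*τ))
      = μm - S3/ε^2*(φm - 2*φn + φp) + S4*(lm - 2*ln + lp) := by
    rw [e1]; field_simp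
  have E3 : ξ*(h*(1/ρ)*(2*μn - μp)) = ((3*Tm - 4*Tn + Tp)/(2*τ) - D*lT)/K := by
    rw [e3]; field_simp; ring
  linear_combination ((3*φm - 4*φn + φp)/(2*τ)) * E1 + ((3*φm - 4*φn + φp)/(2*τ)) * e2
    + (-(ξ*(lam/ε)*h*(2*Tn - Tp))) * e1 + (-(lam/ε*Tm)) * E3


set_option maxHeartbeats 2000000 in
/-- **Unconditional energy stability of the second-order BDF2 scheme.**
`φp, Tp, μp, Rp` are the solution at time level `n−1`; `φn, Tn, μn, Rn` at level `n`;
`φm, Tm, μm, Rm` at level `n+1`; `gb = g(φ̄)`, `hb = h′(φ̄)`, `ρb = ϱ(φ̄)` for the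
extrapolation `φ̄ = 2φⁿ − φ^{n−1}`; `e = E₁(φ̄) > 0`, `ξ = R^{n+1}/√e`;
the extrapolations `T̄ = 2Tⁿ − T^{n−1}`, `μ̄ = 2μⁿ − μ^{n−1}` are written out in full. -/
theorem second_order_unconditional_stability
    (Ω : Set Plane) (hΩ : MeasurableSet Ω)
    (τ ε lam D K S1 S2 S3 S4 : ℝ)
    (hτ : 0 < τ) (hε : 0 < ε) (hlam : 0 < lam) (hD : 0 < D) (hK : 0 < K)
    (hS1 : 0 ≤ S1) (hS2 : 0 ≤ S2) (hS3 : 0 ≤ S3) (hS4 : 0 ≤ S4)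
    (φp φn φm Tp Tn Tm : Plane → ℝ)
    (hφp : ContDiff ℝ 2 φp) (hφn : ContDiff ℝ 2 φn) (hφm : ContDiff ℝ 2 φm)
    (hTp : ContDiff ℝ 2 Tp) (hTn : ContDiff ℝ 2 Tn) (hTm : ContDiff ℝ 2 Tm)
    (μp μn μm gb hb ρb : Plane → ℝ) (hρb : ∀ x ∈ Ω, 0 < ρb x)
    (e : ℝ) (he : 0 < e) (Rp Rn Rm ξ : ℝ) (hξ : ξ = Rm / Real.sqrt e)
    -- every integrand appearing is assumed integrable over Ω:
    (hIa1 : IntegrableOn (fun x => ‖gradient φm x‖ ^ 2) Ω)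
    (hIa2 : IntegrableOn (fun x => ‖2 • gradient φm x - gradient φn x‖ ^ 2) Ω)
    (hIa3 : IntegrableOn (fun x => (φm x) ^ 2) Ω)
    (hIa4 : IntegrableOn (fun x => (2 * φm x - φn x) ^ 2) Ω)
    (hIa5 : IntegrableOn (fun x => (φm x - φn x) ^ 2) Ω)
    (hIa6 : IntegrableOn (fun x => ‖gradient φm x - gradient φn x‖ ^ 2) Ω)
    (hIa7 : IntegrableOn (fun x => (Tm x) ^ 2) Ω)
    (hIa8 : IntegrableOn (fun x => (2 * Tm x - Tn x) ^ 2) Ω)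
    (hIb1 : IntegrableOn (fun x => ‖gradient φn x‖ ^ 2) Ω)
    (hIb2 : IntegrableOn (fun x => ‖2 • gradient φn x - gradient φp x‖ ^ 2) Ω)
    (hIb3 : IntegrableOn (fun x => (φn x) ^ 2) Ω)
    (hIb4 : IntegrableOn (fun x => (2 * φn x - φp x) ^ 2) Ω)
    (hIb5 : IntegrableOn (fun x => (φn x - φp x) ^ 2) Ω)
    (hIb6 : IntegrableOn (fun x => ‖gradient φn x - gradient φp x‖ ^ 2) Ω)
    (hIb7 : IntegrableOn (fun x => (Tn x) ^ 2) Ω)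
    (hIb8 : IntegrableOn (fun x => (2 * Tn x - Tp x) ^ 2) Ω)
    (hIq1 : IntegrableOn (fun x => ‖gradient φm x - 2 • gradient φn x + gradient φp x‖ ^ 2) Ω)
    (hIq2 : IntegrableOn (fun x => (φm x - 2 * φn x + φp x) ^ 2) Ω)
    (hIq3 : IntegrableOn (fun x => (Tm x - 2 * Tn x + Tp x) ^ 2) Ω)
    (hId1 : IntegrableOn (fun x => ρb x * ((3 * φm x - 4 * φn x + φp x) / (2 * τ)) ^ 2) Ω)
    (hId2 : IntegrableOn (fun x => ‖gradient Tm x‖ ^ 2) Ω)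
    (hIr1 : IntegrableOn (fun x => gb x * (3 * φm x - 4 * φn x + φp x) / (2 * τ)) Ω)
    (hIr2 : IntegrableOn (fun x => hb x * (1 / ρb x) *
        ((2 * μn x - μp x) * Tm x - μm x * (2 * Tn x - Tp x))) Ω)
    (hIr3 : IntegrableOn (fun x => hb x * (1 / ρb x) * (2 * Tn x - Tp x) *
        ((S3 / ε ^ 2) * (φm x - 2 * φn x + φp x)
          - S4 * (lap φm x - 2 * lap φn x + lap φp x))) Ω)
    (hIp1 : IntegrableOn (fun x => lap φm x * (3 * φm x - 4 * φn x + φp x)) Ω)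
    (hIp2 : IntegrableOn
      (fun x => ⟪gradient φm x, 3 • gradient φm x - 4 • gradient φn x + gradient φp x⟫) Ω)
    (hIp3 : IntegrableOn (fun x => lap φn x * (3 * φm x - 4 * φn x + φp x)) Ω)
    (hIp4 : IntegrableOn
      (fun x => ⟪gradient φn x, 3 • gradient φm x - 4 • gradient φn x + gradient φp x⟫) Ω)
    (hIp5 : IntegrableOn (fun x => lap φp x * (3 * φm x - 4 * φn x + φp x)) Ω)
    (hIp6 : IntegrableOn
      (fun x => ⟪gradient φp x, 3 • gradient φm x - 4 • gradient φn x + gradient φp x⟫) Ω)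
    (hIp7 : IntegrableOn (fun x => lap Tm x * Tm x) Ω)
    -- (i) the phase-field update:
    (hi : ∀ x ∈ Ω, (3 * φm x - 4 * φn x + φp x) / (2 * τ)
        = (1 / ρb x) * (μm x - (S3 / ε ^ 2) * (φm x - 2 * φn x + φp x)
            + S4 * (lap φm x - 2 * lap φn x + lap φp x)))
    -- (ii) the chemical potential:
    (hii : ∀ x ∈ Ω, μm x
        = -(ξ * gb x) + S1 * lap φm x - (S2 / ε ^ 2) * φm x
            - ξ * (lam / ε) * hb x * (2 * Tn x - Tp x))
    -- (iii) the temperature update: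
    (hiii : ∀ x ∈ Ω, (3 * Tm x - 4 * Tn x + Tp x) / (2 * τ)
        = D * lap Tm x + ξ * K * hb x * (1 / ρb x) * (2 * μn x - μp x))
    -- (iv) the scalar auxiliary-variable equation:
    (hiv : (3 * Rm - 4 * Rn + Rp) / (2 * τ)
        = (1 / (2 * Real.sqrt e)) *
            ((∫ x in Ω, gb x * (3 * φm x - 4 * φn x + φp x) / (2 * τ))
              - (lam / ε) * (∫ x in Ω, hb x * (1 / ρb x) *
                  ((2 * μn x - μp x) * Tm x - μm x * (2 * Tn x - Tp x)))
              - (lam / ε) * (∫ x in Ω, hb x * (1 / ρb x) * (2 * Tn x - Tp x) *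
                  ((S3 / ε ^ 2) * (φm x - 2 * φn x + φp x)
                    - S4 * (lap φm x - 2 * lap φn x + lap φp x)))))
    -- (v) integration by parts identities:
    (hibp1 : (∫ x in Ω, lap φm x * (3 * φm x - 4 * φn x + φp x))
        = -∫ x in Ω, ⟪gradient φm x, 3 • gradient φm x - 4 • gradient φn x + gradient φp x⟫)
    (hibp2 : (∫ x in Ω, lap φn x * (3 * φm x - 4 * φn x + φp x))
        = -∫ x in Ω, ⟪gradient φn x, 3 • gradient φm x - 4 • gradient φn x + gradient φp x⟫)
    (hibp3 : (∫ x in Ω, lap φp x * (3 * φm x - 4 * φn x + φp x))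
        = -∫ x in Ω, ⟪gradient φp x, 3 • gradient φm x - 4 • gradient φn x + gradient φp x⟫)
    (hibp4 : (∫ x in Ω, lap Tm x * Tm x) = -∫ x in Ω, ‖gradient Tm x‖ ^ 2) :
    -- conclusion: E^{n+1} ≤ E^n
    (1 / 4) * (S1 * ((∫ x in Ω, ‖gradient φm x‖ ^ 2)
            + ∫ x in Ω, ‖2 • gradient φm x - gradient φn x‖ ^ 2)
        + (S2 / ε ^ 2) * ((∫ x in Ω, (φm x) ^ 2) + ∫ x in Ω, (2 * φm x - φn x) ^ 2)
        + (2 * S3 / ε ^ 2) * (∫ x in Ω, (φm x - φn x) ^ 2)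
        + 2 * S4 * (∫ x in Ω, ‖gradient φm x - gradient φn x‖ ^ 2)
        + (lam / (ε * K)) * ((∫ x in Ω, (Tm x) ^ 2) + ∫ x in Ω, (2 * Tm x - Tn x) ^ 2)
        + 2 * (Rm ^ 2 + (2 * Rm - Rn) ^ 2))
      ≤ (1 / 4) * (S1 * ((∫ x in Ω, ‖gradient φn x‖ ^ 2)
            + ∫ x in Ω, ‖2 • gradient φn x - gradient φp x‖ ^ 2)
        + (S2 / ε ^ 2) * ((∫ x in Ω, (φn x) ^ 2) + ∫ x in Ω, (2 * φn x - φp x) ^ 2)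
        + (2 * S3 / ε ^ 2) * (∫ x in Ω, (φn x - φp x) ^ 2)
        + 2 * S4 * (∫ x in Ω, ‖gradient φn x - gradient φp x‖ ^ 2)
        + (lam / (ε * K)) * ((∫ x in Ω, (Tn x) ^ 2) + ∫ x in Ω, (2 * Tn x - Tp x) ^ 2)
        + 2 * (Rn ^ 2 + (2 * Rn - Rp) ^ 2)) := by
  -- abbreviations for convenience
  have hτne : τ ≠ 0 := ne_of_gt hτ
  have hτinv : τ * τ⁻¹ = 1 := mul_inv_cancel₀ hτne
  -- integrability of the grouped integrands
  have hg3 : IntegrableOn (fun x => (φm x) ^ 2 + (2 * φm x - φn x) ^ 2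
      + (φm x - 2 * φn x + φp x) ^ 2 - (φn x) ^ 2 - (2 * φn x - φp x) ^ 2) Ω :=
    (((hIa3.add hIa4).add hIq2).sub hIb3).sub hIb4
  have hg4 : IntegrableOn (fun x => (Tm x) ^ 2 + (2 * Tm x - Tn x) ^ 2
      + (Tm x - 2 * Tn x + Tp x) ^ 2 - (Tn x) ^ 2 - (2 * Tn x - Tp x) ^ 2) Ω :=
    (((hIa7.add hIa8).add hIq3).sub hIb7).sub hIb8
  have hg6 : IntegrableOn (fun x => hb x * (1 / ρb x) *
      ((2 * μn x - μp x) * Tm x - μm x * (2 * Tn x - Tp x))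
      + hb x * (1 / ρb x) * (2 * Tn x - Tp x) *
      ((S3 / ε ^ 2) * (φm x - 2 * φn x + φp x)
        - S4 * (lap φm x - 2 * lap φn x + lap φp x))) Ω := hIr2.add hIr3
  have hg7 : IntegrableOn (fun x => (φm x - φn x) ^ 2
      + 2 * ((φm x - 2 * φn x + φp x) ^ 2) - (φn x - φp x) ^ 2) Ω :=
    (hIa5.add (hIq2.const_mul 2)).sub hIb5
  have hg8 : IntegrableOn (fun x => lap φm x * (3 * φm x - 4 * φn x + φp x)
      - 2 * (lap φn x * (3 * φm x - 4 * φn x + φp x))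
      + lap φp x * (3 * φm x - 4 * φn x + φp x)) Ω :=
    (hIp1.sub (hIp3.const_mul 2)).add hIp5
  -- the tested scheme, pointwise, then integrated
  have HK0 : (∫ x in Ω, ρb x * ((3 * φm x - 4 * φn x + φp x) / (2 * τ)) ^ 2)
      = ∫ x in Ω, ((-ξ) * (gb x * (3 * φm x - 4 * φn x + φp x) / (2 * τ))
        + (S1 / (2 * τ)) * (lap φm x * (3 * φm x - 4 * φn x + φp x))
        - (S2 / (4 * τ * ε ^ 2)) * ((φm x) ^ 2 + (2 * φm x - φn x) ^ 2
            + (φm x - 2 * φn x + φp x) ^ 2 - (φn x) ^ 2 - (2 * φn x - φp x) ^ 2)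
        - (lam / (4 * τ * ε * K)) * ((Tm x) ^ 2 + (2 * Tm x - Tn x) ^ 2
            + (Tm x - 2 * Tn x + Tp x) ^ 2 - (Tn x) ^ 2 - (2 * Tn x - Tp x) ^ 2)
        + (lam * D / (ε * K)) * (lap Tm x * Tm x)
        + (ξ * (lam / ε)) * (hb x * (1 / ρb x) *
            ((2 * μn x - μp x) * Tm x - μm x * (2 * Tn x - Tp x))
            + hb x * (1 / ρb x) * (2 * Tn x - Tp x) *
            ((S3 / ε ^ 2) * (φm x - 2 * φn x + φp x)
              - S4 * (lap φm x - 2 * lap φn x + lap φp x)))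
        - (S3 / (2 * τ * ε ^ 2)) * ((φm x - φn x) ^ 2
            + 2 * ((φm x - 2 * φn x + φp x) ^ 2) - (φn x - φp x) ^ 2)
        + (S4 / (2 * τ)) * (lap φm x * (3 * φm x - 4 * φn x + φp x)
            - 2 * (lap φn x * (3 * φm x - 4 * φn x + φp x))
            + lap φp x * (3 * φm x - 4 * φn x + φp x))) := by
    refine setIntegral_congr_fun hΩ (fun x hx => ?_)
    exact key_pointwise (hρb x hx).ne' (ne_of_gt hK) (hi x hx) (hii x hx) (hiii x hx)
  rw [intV8 _ _ _ _ _ _ _ _ hIr1 hIp1 hg3 hg4 hIp7 hg6 hg7 hg8,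
    intV5 hIa3 hIa4 hIq2 hIb3 hIb4, intV5 hIa7 hIa8 hIq3 hIb7 hIb8,
    integral_add hIr2 hIr3, intV3c hIa5 hIq2 hIb5, intV3m hIp1 hIp3 hIp5] at HK0
  -- gradient expansions
  have HG1 : (∫ x in Ω, ⟪gradient φm x, 3 • gradient φm x - 4 • gradient φn x + gradient φp x⟫)
      = ((∫ x in Ω, ‖gradient φm x‖ ^ 2) + (∫ x in Ω, ‖2 • gradient φm x - gradient φn x‖ ^ 2)
        + (∫ x in Ω, ‖gradient φm x - 2 • gradient φn x + gradient φp x‖ ^ 2)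
        - (∫ x in Ω, ‖gradient φn x‖ ^ 2)
        - (∫ x in Ω, ‖2 • gradient φn x - gradient φp x‖ ^ 2)) / 2 := by
    have h1 : Set.EqOn
        (fun x => ⟪gradient φm x, 3 • gradient φm x - 4 • gradient φn x + gradient φp x⟫)
        (fun x => (‖gradient φm x‖ ^ 2 + ‖2 • gradient φm x - gradient φn x‖ ^ 2
          + ‖gradient φm x - 2 • gradient φn x + gradient φp x‖ ^ 2 - ‖gradient φn x‖ ^ 2
          - ‖2 • gradient φn x - gradient φp x‖ ^ 2) / 2) Ω :=
      fun x _ => inner_bdf2 _ _ _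
    rw [setIntegral_congr_fun hΩ h1, integral_div, intV5 hIa1 hIa2 hIq1 hIb1 hIb2]
  have HG2 : (∫ x in Ω, ⟪gradient φm x, 3 • gradient φm x - 4 • gradient φn x + gradient φp x⟫)
      - 2 * (∫ x in Ω, ⟪gradient φn x, 3 • gradient φm x - 4 • gradient φn x + gradient φp x⟫)
      + (∫ x in Ω, ⟪gradient φp x, 3 • gradient φm x - 4 • gradient φn x + gradient φp x⟫)
      = (∫ x in Ω, ‖gradient φm x - gradient φn x‖ ^ 2)
        + 2 * (∫ x in Ω, ‖gradient φm x - 2 • gradient φn x + gradient φp x‖ ^ 2)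
        - (∫ x in Ω, ‖gradient φn x - gradient φp x‖ ^ 2) := by
    rw [← intV3m hIp2 hIp4 hIp6]
    have h2 : Set.EqOn
        (fun x => ⟪gradient φm x, 3 • gradient φm x - 4 • gradient φn x + gradient φp x⟫
          - 2 * ⟪gradient φn x, 3 • gradient φm x - 4 • gradient φn x + gradient φp x⟫
          + ⟪gradient φp x, 3 • gradient φm x - 4 • gradient φn x + gradient φp x⟫)
        (fun x => ‖gradient φm x - gradient φn x‖ ^ 2
          + 2 * ‖gradient φm x - 2 • gradient φn x + gradient φp x‖ ^ 2
          - ‖gradient φn x - gradient φp x‖ ^ 2) Ω :=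
      fun x _ => inner_bdf2' _ _ _
    rw [setIntegral_congr_fun hΩ h2, intV3c hIa6 hIq1 hIb6]
  -- the auxiliary-variable equation tested with 2 R^{n+1}
  have HR : Rm * (3 * Rm - 4 * Rn + Rp) / τ
      = ξ * ((∫ x in Ω, gb x * (3 * φm x - 4 * φn x + φp x) / (2 * τ))
        - (lam / ε) * (∫ x in Ω, hb x * (1 / ρb x) *
            ((2 * μn x - μp x) * Tm x - μm x * (2 * Tn x - Tp x)))
        - (lam / ε) * (∫ x in Ω, hb x * (1 / ρb x) * (2 * Tn x - Tp x) *
            ((S3 / ε ^ 2) * (φm x - 2 * φn x + φp x)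
              - S4 * (lap φm x - 2 * lap φn x + lap φp x)))) := by
    rw [hξ]
    linear_combination (2 * Rm) * hiv
  -- nonnegativity facts
  have hPos : 0 ≤ ∫ x in Ω, ρb x * ((3 * φm x - 4 * φn x + φp x) / (2 * τ)) ^ 2 :=
    setIntegral_nonneg hΩ fun x hx => mul_nonneg (hρb x hx).le (sq_nonneg _)
  have hGpos : 0 ≤ ∫ x in Ω, ‖gradient Tm x‖ ^ 2 :=
    setIntegral_nonneg hΩ fun x _ => by positivity
  have hQ1pos : 0 ≤ ∫ x in Ω, ‖gradient φm x - 2 • gradient φn x + gradient φp x‖ ^ 2 :=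
    setIntegral_nonneg hΩ fun x _ => by positivity
  have hQ2pos : 0 ≤ ∫ x in Ω, (φm x - 2 * φn x + φp x) ^ 2 :=
    setIntegral_nonneg hΩ fun x _ => sq_nonneg _
  have hQ3pos : 0 ≤ ∫ x in Ω, (Tm x - 2 * Tn x + Tp x) ^ 2 :=
    setIntegral_nonneg hΩ fun x _ => sq_nonneg _
  -- name all the integrals
  set A1 := ∫ x in Ω, ‖gradient φm x‖ ^ 2
  set A2 := ∫ x in Ω, ‖2 • gradient φm x - gradient φn x‖ ^ 2
  set A3 := ∫ x in Ω, (φm x) ^ 2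
  set A4 := ∫ x in Ω, (2 * φm x - φn x) ^ 2
  set A5 := ∫ x in Ω, (φm x - φn x) ^ 2
  set A6 := ∫ x in Ω, ‖gradient φm x - gradient φn x‖ ^ 2
  set A7 := ∫ x in Ω, (Tm x) ^ 2
  set A8 := ∫ x in Ω, (2 * Tm x - Tn x) ^ 2
  set B1 := ∫ x in Ω, ‖gradient φn x‖ ^ 2
  set B2 := ∫ x in Ω, ‖2 • gradient φn x - gradient φp x‖ ^ 2
  set B3 := ∫ x in Ω, (φn x) ^ 2
  set B4 := ∫ x in Ω, (2 * φn x - φp x) ^ 2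
  set B5 := ∫ x in Ω, (φn x - φp x) ^ 2
  set B6 := ∫ x in Ω, ‖gradient φn x - gradient φp x‖ ^ 2
  set B7 := ∫ x in Ω, (Tn x) ^ 2
  set B8 := ∫ x in Ω, (2 * Tn x - Tp x) ^ 2
  set Q1 := ∫ x in Ω, ‖gradient φm x - 2 • gradient φn x + gradient φp x‖ ^ 2
  set Q2 := ∫ x in Ω, (φm x - 2 * φn x + φp x) ^ 2
  set Q3 := ∫ x in Ω, (Tm x - 2 * Tn x + Tp x) ^ 2
  set iD := ∫ x in Ω, ρb x * ((3 * φm x - 4 * φn x + φp x) / (2 * τ)) ^ 2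
  set iG := ∫ x in Ω, ‖gradient Tm x‖ ^ 2
  -- combine everything into one energy identity
  have EQ : iD + (lam * D / (ε * K)) * iG + Rm * (3 * Rm - 4 * Rn + Rp) / τ
      + (S1 / (4 * τ)) * (A1 + A2 + Q1 - B1 - B2)
      + (S2 / (4 * τ * ε ^ 2)) * (A3 + A4 + Q2 - B3 - B4)
      + (lam / (4 * τ * ε * K)) * (A7 + A8 + Q3 - B7 - B8)
      + (S3 / (2 * τ * ε ^ 2)) * (A5 + 2 * Q2 - B5)
      + (S4 / (2 * τ)) * (A6 + 2 * Q1 - B6) = 0 := by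
    linear_combination HK0 + HR + ((S1 + S4) / (2 * τ)) * hibp1 + (-(S4 / τ)) * hibp2
      + (S4 / (2 * τ)) * hibp3 + (lam * D / (ε * K)) * hibp4
      + (-(S1 / (2 * τ))) * HG1 + (-(S4 / (2 * τ))) * HG2
  -- the discrete energy dissipation identity
  have DIFF : (1 / 4) * (S1 * (A1 + A2) + (S2 / ε ^ 2) * (A3 + A4) + (2 * S3 / ε ^ 2) * A5
        + 2 * S4 * A6 + (lam / (ε * K)) * (A7 + A8) + 2 * (Rm ^ 2 + (2 * Rm - Rn) ^ 2))
      = (1 / 4) * (S1 * (B1 + B2) + (S2 / ε ^ 2) * (B3 + B4) + (2 * S3 / ε ^ 2) * B5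
        + 2 * S4 * B6 + (lam / (ε * K)) * (B7 + B8) + 2 * (Rn ^ 2 + (2 * Rn - Rp) ^ 2))
        - (τ * iD + τ * (lam * D / (ε * K)) * iG + (1 / 2) * (Rm - 2 * Rn + Rp) ^ 2
          + (1 / 4) * (S1 * Q1) + (1 / 4) * ((S2 / ε ^ 2) * Q2)
          + (1 / 4) * ((lam / (ε * K)) * Q3) + (S3 / ε ^ 2) * Q2 + S4 * Q1) := by
    linear_combination τ * EQ + (-(Rm * (3 * Rm - 4 * Rn + Rp)
      + (S1 / 4) * (A1 + A2 + Q1 - B1 - B2) + (S2 / (4 * ε ^ 2)) * (A3 + A4 + Q2 - B3 - B4)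
      + (lam / (4 * ε * K)) * (A7 + A8 + Q3 - B7 - B8)
      + (S3 / (2 * ε ^ 2)) * (A5 + 2 * Q2 - B5) + (S4 / 2) * (A6 + 2 * Q1 - B6))) * hτinv
  -- conclude
  have hn1 : 0 ≤ τ * iD := mul_nonneg hτ.le hPos
  have hn2 : 0 ≤ τ * (lam * D / (ε * K)) * iG :=
    mul_nonneg (mul_nonneg hτ.le (by positivity)) hGpos
  have hn3 : 0 ≤ (Rm - 2 * Rn + Rp) ^ 2 := sq_nonneg _
  have hn4 : 0 ≤ S1 * Q1 := mul_nonneg hS1 hQ1pos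
  have hn5 : 0 ≤ (S2 / ε ^ 2) * Q2 := mul_nonneg (by positivity) hQ2pos
  have hn6 : 0 ≤ (lam / (ε * K)) * Q3 := mul_nonneg (by positivity) hQ3pos
  have hn7 : 0 ≤ (S3 / ε ^ 2) * Q2 := mul_nonneg (by positivity) hQ2pos
  have hn8 : 0 ≤ S4 * Q1 := mul_nonneg hS4 hQ1pos
  linarith [DIFF, hn1, hn2, hn3, hn4, hn5, hn6, hn7, hn8]
end

section
/- Continuous energy dissipation law for the auxiliary-variable reformulation (equation (2.10)). Suppose the reformulated system equations (i)–(iv) and the integration-by-parts identities (v) (all listed in the context) hold at a fixed time. Then the chain-rule expansion of the time derivative of the modified energy E(φ, R, T) = ∫( (λ/(2εK))T² + (S₁/2)|∇φ|² + (S₂/(2ε²))φ² − B ) + R² satisfies (λ/(εK))∫ T·T_t + S₁∫ ∇φ·∇φ_t + (S₂/ε²)∫ φ·φ_t + 2R·R′ = −∫ ϱ·(φ_t)² − (λD/(εK))∫ |∇T|²; in particular this quantity is ≤ 0 when ϱ > 0, λ, D, ε, K > 0. -/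
open MeasureTheory
open scoped RealInnerProductSpace

/-- **Continuous energy dissipation law for the auxiliary-variable reformulation
(equation (2.10)).** At a fixed time, `φ, T` are the phase function and temperature, `φt, Tt`
their time derivatives, `μ` the chemical potential, `g = g(φ)`, `h = h′(φ)`, `ρ = ϱ(φ)`,
`e = E₁(φ) > 0`, `R` the auxiliary variable, `R'` its time derivative, and `ξ = R/√e`.
The chain-rule expansion of `(d/dt)E(φ, R, T)` equals
`−∫ϱ·(φ_t)² − (λD/(εK))∫|∇T|²`; in particular it is nonpositive. -/
theorem continuous_energy_dissipation_law
    (Ω : Set Plane) (hΩ : MeasurableSet Ω)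
    (ε lam D K S1 S2 B : ℝ)
    (hε : 0 < ε) (hlam : 0 < lam) (hD : 0 < D) (hK : 0 < K)
    (φ T : Plane → ℝ) (hφ : ContDiff ℝ 2 φ) (hT : ContDiff ℝ 2 T)
    (φt : Plane → ℝ) (hφt : Differentiable ℝ φt)
    (Tt μ g h ρ : Plane → ℝ) (hρ : ∀ x ∈ Ω, 0 < ρ x)
    (e : ℝ) (he : 0 < e) (R R' ξ : ℝ) (hξ : ξ = R / Real.sqrt e)
    -- every integrand appearing is assumed integrable over Ω:
    (hI1 : IntegrableOn (fun x => T x * Tt x) Ω)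
    (hI2 : IntegrableOn (fun x => ⟪gradient φ x, gradient φt x⟫) Ω)
    (hI3 : IntegrableOn (fun x => φ x * φt x) Ω)
    (hI4 : IntegrableOn (fun x => ρ x * (φt x) ^ 2) Ω)
    (hI5 : IntegrableOn (fun x => ‖gradient T x‖ ^ 2) Ω)
    (hI6 : IntegrableOn (fun x => g x * φt x) Ω)
    (hI7 : IntegrableOn (fun x => lap φ x * φt x) Ω)
    (hI8 : IntegrableOn (fun x => lap T x * T x) Ω)
    -- (i) the phase-field equation:
    (hi : ∀ x ∈ Ω, φt x = (1 / ρ x) * μ x)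
    -- (ii) the chemical potential:
    (hii : ∀ x ∈ Ω, μ x
        = -(ξ * g x) + S1 * lap φ x - (S2 / ε ^ 2) * φ x - ξ * (lam / ε) * h x * T x)
    -- (iii) the temperature equation:
    (hiii : ∀ x ∈ Ω, Tt x = D * lap T x + ξ * K * h x * (1 / ρ x) * μ x)
    -- (iv) the auxiliary-variable equation:
    (hiv : R' = (1 / (2 * Real.sqrt e)) * ∫ x in Ω, g x * φt x)
    -- (v) integration by parts identities:
    (hibp1 : (∫ x in Ω, lap φ x * φt x) = -∫ x in Ω, ⟪gradient φ x, gradient φt x⟫)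
    (hibp2 : (∫ x in Ω, lap T x * T x) = -∫ x in Ω, ‖gradient T x‖ ^ 2) :
    (lam / (ε * K)) * (∫ x in Ω, T x * Tt x)
        + S1 * (∫ x in Ω, ⟪gradient φ x, gradient φt x⟫)
        + (S2 / ε ^ 2) * (∫ x in Ω, φ x * φt x)
        + 2 * R * R'
      = -(∫ x in Ω, ρ x * (φt x) ^ 2) - (lam * D / (ε * K)) * (∫ x in Ω, ‖gradient T x‖ ^ 2)
    ∧ (lam / (ε * K)) * (∫ x in Ω, T x * Tt x)
        + S1 * (∫ x in Ω, ⟪gradient φ x, gradient φt x⟫)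
        + (S2 / ε ^ 2) * (∫ x in Ω, φ x * φt x)
        + 2 * R * R' ≤ 0 := by
  have hsqrt : (0:ℝ) < Real.sqrt e := Real.sqrt_pos.mpr he
  have hε' : ε ≠ 0 := hε.ne'
  have hK' : K ≠ 0 := hK.ne'
  -- 2 R R' = ξ ∫ g φt
  have hRR : 2 * R * R' = ξ * ∫ x in Ω, g x * φt x := by
    rw [hiv, hξ]; field_simp
  -- pointwise identity on Ω
  have hpt : ∀ x ∈ Ω,
      (lam / (ε * K)) * (T x * Tt x) + ρ x * (φt x) ^ 2 + ξ * (g x * φt x)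
        + (S2 / ε ^ 2) * (φ x * φt x)
      = (lam * D / (ε * K)) * (lap T x * T x) + S1 * (lap φ x * φt x) := by
    intro x hx
    have hρx : ρ x ≠ 0 := (hρ x hx).ne'
    have h1 : μ x = ρ x * φt x := by rw [hi x hx]; field_simp
    have h2 : ρ x * φt x = -(ξ * g x) + S1 * lap φ x - (S2 / ε ^ 2) * φ x
        - ξ * (lam / ε) * h x * T x := by rw [← h1]; exact hii x hx
    have h3 : Tt x = D * lap T x + ξ * K * h x * φt x := by
      rw [hiii x hx, h1]; field_simp
    have h4 : ρ x * (φt x) ^ 2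
        = (-(ξ * g x) + S1 * lap φ x - (S2 / ε ^ 2) * φ x
            - ξ * (lam / ε) * h x * T x) * φt x := by
      rw [pow_two, ← mul_assoc, h2]
    rw [h3, h4]
    field_simp
    ring
  -- integrate the pointwise identity
  have hIntEq : (∫ x in Ω, ((lam / (ε * K)) * (T x * Tt x) + ρ x * (φt x) ^ 2
        + ξ * (g x * φt x) + (S2 / ε ^ 2) * (φ x * φt x)))
      = ∫ x in Ω, ((lam * D / (ε * K)) * (lap T x * T x) + S1 * (lap φ x * φt x)) := by
    refine setIntegral_congr_fun hΩ fun x hx => hpt x hx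
  have hL : (∫ x in Ω, ((lam / (ε * K)) * (T x * Tt x) + ρ x * (φt x) ^ 2
        + ξ * (g x * φt x) + (S2 / ε ^ 2) * (φ x * φt x)))
      = (lam / (ε * K)) * (∫ x in Ω, T x * Tt x) + (∫ x in Ω, ρ x * (φt x) ^ 2)
        + ξ * (∫ x in Ω, g x * φt x) + (S2 / ε ^ 2) * (∫ x in Ω, φ x * φt x) := by
    rw [integral_add, integral_add, integral_add, integral_const_mul,
      integral_const_mul, integral_const_mul]
    · exact hI1.const_mul _
    · exact hI4
    · exact (hI1.const_mul _).add hI4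
    · exact hI6.const_mul _
    · exact ((hI1.const_mul _).add hI4).add (hI6.const_mul _)
    · exact hI3.const_mul _
  have hR : (∫ x in Ω, ((lam * D / (ε * K)) * (lap T x * T x) + S1 * (lap φ x * φt x)))
      = (lam * D / (ε * K)) * (∫ x in Ω, lap T x * T x)
        + S1 * (∫ x in Ω, lap φ x * φt x) := by
    rw [integral_add (hI8.const_mul _) (hI7.const_mul _), integral_const_mul,
      integral_const_mul]
  have key : (lam / (ε * K)) * (∫ x in Ω, T x * Tt x)
        + S1 * (∫ x in Ω, ⟪gradient φ x, gradient φt x⟫)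
        + (S2 / ε ^ 2) * (∫ x in Ω, φ x * φt x)
        + 2 * R * R'
      = -(∫ x in Ω, ρ x * (φt x) ^ 2)
        - (lam * D / (ε * K)) * (∫ x in Ω, ‖gradient T x‖ ^ 2) := by
    rw [hL] at hIntEq
    rw [hR, hibp1, hibp2] at hIntEq
    rw [hRR]
    linarith
  refine ⟨key, ?_⟩
  rw [key]
  have hB : 0 ≤ ∫ x in Ω, ρ x * (φt x) ^ 2 :=
    setIntegral_nonneg hΩ fun x hx => mul_nonneg (hρ x hx).le (sq_nonneg _)
  have hC : 0 ≤ ∫ x in Ω, ‖gradient T x‖ ^ 2 :=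
    setIntegral_nonneg hΩ fun x _ => by positivity
  have hc : 0 < lam * D / (ε * K) := by positivity
  nlinarith
end

section
/- Positivity of A₁ and unique solvability of the auxiliary scalar equation (equation (3.17)). Under the hypotheses listed in the context, the quantity A₁ := 2e − ∫ gⁿ·φ₂ + (τλ/ε)∫ hⁿ·(1/ϱⁿ)·(μⁿ·T₂ − Tⁿ·μ₂) + (τλ/ε)∫ hⁿ·(1/ϱⁿ)·Tⁿ·((S₃/ε²)φ₂ − S₄Δφ₂) satisfies A₁ = 2e + ∫ ((ε²ϱⁿ + τ(S₂+S₃))/(τε²))·φ₂² + (S₁+S₄)∫ |∇φ₂|² + (λ/(εK))( ∫ T₂² + τD∫ |∇T₂|² ) and in particular A₁ > 0; consequently, for every A₂ ∈ ℝ the equation ξ·A₁ = A₂ has the unique real solution ξ = A₂/A₁. -/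
open MeasureTheory
open scoped RealInnerProductSpace

/-- **Positivity of A₁ and unique solvability of the auxiliary scalar equation
(equation (3.17)).** `φ2, μ2` and `T2` solve the sub-problems (3.9) and (3.11);
`g = g(φⁿ)`, `h = h′(φⁿ)`, `Tn = Tⁿ`, `μn = μⁿ`, `ρ = ϱ(φⁿ)`, `e = E₁(φⁿ) > 0`. -/
theorem A1_positive_and_unique_solvability
    (Ω : Set Plane) (hΩ : MeasurableSet Ω)
    (τ ε lam D K S1 S2 S3 S4 : ℝ)
    (hτ : 0 < τ) (hε : 0 < ε) (hlam : 0 < lam) (hD : 0 < D) (hK : 0 < K)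
    (hS1 : 0 ≤ S1) (hS2 : 0 ≤ S2) (hS3 : 0 ≤ S3) (hS4 : 0 ≤ S4)
    (e : ℝ) (he : 0 < e)
    (φ2 T2 : Plane → ℝ) (hφ2 : ContDiff ℝ 2 φ2) (hT2 : ContDiff ℝ 2 T2)
    (μ2 μn g h Tn ρ : Plane → ℝ) (hρ : ∀ x ∈ Ω, 0 < ρ x)
    -- every integrand appearing is assumed integrable over Ω:
    (hI1 : IntegrableOn (fun x => g x * φ2 x) Ω)
    (hI2 : IntegrableOn (fun x => h x * (1 / ρ x) * (μn x * T2 x - Tn x * μ2 x)) Ω)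
    (hI3 : IntegrableOn (fun x => h x * (1 / ρ x) * Tn x *
        ((S3 / ε ^ 2) * φ2 x - S4 * lap φ2 x)) Ω)
    (hI4 : IntegrableOn (fun x => ((ε ^ 2 * ρ x + τ * (S2 + S3)) / (τ * ε ^ 2)) * (φ2 x) ^ 2) Ω)
    (hI5 : IntegrableOn (fun x => ‖gradient φ2 x‖ ^ 2) Ω)
    (hI6 : IntegrableOn (fun x => (T2 x) ^ 2) Ω)
    (hI7 : IntegrableOn (fun x => ‖gradient T2 x‖ ^ 2) Ω)
    (hI8 : IntegrableOn (fun x => lap φ2 x * φ2 x) Ω)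
    (hI9 : IntegrableOn (fun x => lap T2 x * T2 x) Ω)
    -- the sub-problems (3.9) and (3.11):
    (hi : ∀ x ∈ Ω, φ2 x / τ = (1 / ρ x) * (μ2 x - (S3 / ε ^ 2) * φ2 x + S4 * lap φ2 x))
    (hii : ∀ x ∈ Ω, μ2 x
        = -g x + S1 * lap φ2 x - (S2 / ε ^ 2) * φ2 x - (lam / ε) * h x * Tn x)
    (hiii : ∀ x ∈ Ω, T2 x / τ = D * lap T2 x + K * h x * (1 / ρ x) * μn x)
    -- integration by parts:
    (hibp1 : (∫ x in Ω, lap φ2 x * φ2 x) = -∫ x in Ω, ‖gradient φ2 x‖ ^ 2)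
    (hibp2 : (∫ x in Ω, lap T2 x * T2 x) = -∫ x in Ω, ‖gradient T2 x‖ ^ 2)
    -- the quantity A₁:
    (A1 : ℝ)
    (hA1 : A1 = 2 * e - (∫ x in Ω, g x * φ2 x)
        + (τ * lam / ε) * (∫ x in Ω, h x * (1 / ρ x) * (μn x * T2 x - Tn x * μ2 x))
        + (τ * lam / ε) * (∫ x in Ω, h x * (1 / ρ x) * Tn x *
            ((S3 / ε ^ 2) * φ2 x - S4 * lap φ2 x))) :
    A1 = 2 * e + (∫ x in Ω, ((ε ^ 2 * ρ x + τ * (S2 + S3)) / (τ * ε ^ 2)) * (φ2 x) ^ 2)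
          + (S1 + S4) * (∫ x in Ω, ‖gradient φ2 x‖ ^ 2)
          + (lam / (ε * K)) * ((∫ x in Ω, (T2 x) ^ 2)
              + τ * D * ∫ x in Ω, ‖gradient T2 x‖ ^ 2)
      ∧ 0 < A1
      ∧ ∀ A2 ξ : ℝ, ξ * A1 = A2 ↔ ξ = A2 / A1 := by

  -- shorthand
  have hρ0 : ∀ x ∈ Ω, ρ x ≠ 0 := fun x hx => (hρ x hx).ne'
  have hτ' : τ ≠ 0 := hτ.ne'
  have hε' : ε ≠ 0 := hε.ne'
  have hK' : K ≠ 0 := hK.ne'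
  -- pointwise identity
  have key : ∀ x ∈ Ω,
      -(g x * φ2 x)
        + (τ * lam / ε) * (h x * (1 / ρ x) * (μn x * T2 x - Tn x * μ2 x))
        + (τ * lam / ε) * (h x * (1 / ρ x) * Tn x *
            ((S3 / ε ^ 2) * φ2 x - S4 * lap φ2 x))
      = ((ε ^ 2 * ρ x + τ * (S2 + S3)) / (τ * ε ^ 2)) * (φ2 x) ^ 2
          - (S1 + S4) * (lap φ2 x * φ2 x)
          + (lam / (ε * K)) * (T2 x) ^ 2
          - (τ * lam * D / (ε * K)) * (lap T2 x * T2 x) := by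
    intro x hx
    have hρ' : ρ x ≠ 0 := hρ0 x hx
    have h1 := hi x hx
    have h2 := hii x hx
    have h3 := hiii x hx
    have e3 : h x * (1 / ρ x) * μn x = (T2 x / τ - D * lap T2 x) / K := by
      field_simp at h3 ⊢
      linear_combination -h3
    have hμ2 : μ2 x = ρ x * (φ2 x / τ) + (S3 / ε ^ 2) * φ2 x - S4 * lap φ2 x := by
      have e1 : μ2 x - (S3 / ε ^ 2) * φ2 x + S4 * lap φ2 x = ρ x * (φ2 x / τ) := by
        rw [h1]; field_simp
      linarith
    have hg : g x = -μ2 x + S1 * lap φ2 x - (S2 / ε ^ 2) * φ2 x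
        - (lam / ε) * h x * Tn x := by linarith
    have step : -(g x * φ2 x)
        + (τ * lam / ε) * (h x * (1 / ρ x) * (μn x * T2 x - Tn x * μ2 x))
        + (τ * lam / ε) * (h x * (1 / ρ x) * Tn x *
            ((S3 / ε ^ 2) * φ2 x - S4 * lap φ2 x))
        = -(g x * φ2 x) + (τ * lam / ε) * (h x * (1 / ρ x) * μn x) * T2 x
          - (τ * lam / ε) * h x * Tn x *
            ((1 / ρ x) * (μ2 x - (S3 / ε ^ 2) * φ2 x + S4 * lap φ2 x)) := by
      ring
    rw [step, e3, ← h1, hg, hμ2]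
    field_simp
    ring
  -- equality of the combined integrals
  have keyInt :
      (∫ x in Ω, (-(g x * φ2 x)
        + (τ * lam / ε) * (h x * (1 / ρ x) * (μn x * T2 x - Tn x * μ2 x))
        + (τ * lam / ε) * (h x * (1 / ρ x) * Tn x *
            ((S3 / ε ^ 2) * φ2 x - S4 * lap φ2 x))))
      = ∫ x in Ω, (((ε ^ 2 * ρ x + τ * (S2 + S3)) / (τ * ε ^ 2)) * (φ2 x) ^ 2
          - (S1 + S4) * (lap φ2 x * φ2 x)
          + (lam / (ε * K)) * (T2 x) ^ 2
          - (τ * lam * D / (ε * K)) * (lap T2 x * T2 x)) := by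
    refine setIntegral_congr_fun hΩ ?_
    intro x hx
    exact key x hx
  -- split the left integral
  have splitL :
      (∫ x in Ω, (-(g x * φ2 x)
        + (τ * lam / ε) * (h x * (1 / ρ x) * (μn x * T2 x - Tn x * μ2 x))
        + (τ * lam / ε) * (h x * (1 / ρ x) * Tn x *
            ((S3 / ε ^ 2) * φ2 x - S4 * lap φ2 x))))
      = -(∫ x in Ω, g x * φ2 x)
        + (τ * lam / ε) * (∫ x in Ω, h x * (1 / ρ x) * (μn x * T2 x - Tn x * μ2 x))
        + (τ * lam / ε) * (∫ x in Ω, h x * (1 / ρ x) * Tn x *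
            ((S3 / ε ^ 2) * φ2 x - S4 * lap φ2 x)) := by
    have j1 : IntegrableOn (fun x => -(g x * φ2 x)) Ω := hI1.neg
    have j2 : IntegrableOn (fun x => (τ * lam / ε) *
        (h x * (1 / ρ x) * (μn x * T2 x - Tn x * μ2 x))) Ω := hI2.const_mul _
    have j3 : IntegrableOn (fun x => (τ * lam / ε) * (h x * (1 / ρ x) * Tn x *
        ((S3 / ε ^ 2) * φ2 x - S4 * lap φ2 x))) Ω := hI3.const_mul _
    have j12 : IntegrableOn (fun x => -(g x * φ2 x) + (τ * lam / ε) *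
        (h x * (1 / ρ x) * (μn x * T2 x - Tn x * μ2 x))) Ω := j1.add j2
    rw [integral_add j12 j3, integral_add j1 j2, integral_neg,
      integral_const_mul _ _, integral_const_mul _ _]
  -- split the right integral
  have splitR :
      (∫ x in Ω, (((ε ^ 2 * ρ x + τ * (S2 + S3)) / (τ * ε ^ 2)) * (φ2 x) ^ 2
          - (S1 + S4) * (lap φ2 x * φ2 x)
          + (lam / (ε * K)) * (T2 x) ^ 2
          - (τ * lam * D / (ε * K)) * (lap T2 x * T2 x)))
      = (∫ x in Ω, ((ε ^ 2 * ρ x + τ * (S2 + S3)) / (τ * ε ^ 2)) * (φ2 x) ^ 2)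
        - (S1 + S4) * (∫ x in Ω, lap φ2 x * φ2 x)
        + (lam / (ε * K)) * (∫ x in Ω, (T2 x) ^ 2)
        - (τ * lam * D / (ε * K)) * (∫ x in Ω, lap T2 x * T2 x) := by
    have k8 : IntegrableOn (fun x => (S1 + S4) * (lap φ2 x * φ2 x)) Ω :=
      hI8.const_mul _
    have k6 : IntegrableOn (fun x => (lam / (ε * K)) * (T2 x) ^ 2) Ω :=
      hI6.const_mul _
    have k9 : IntegrableOn (fun x => (τ * lam * D / (ε * K)) * (lap T2 x * T2 x)) Ω :=
      hI9.const_mul _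
    have k48 : IntegrableOn (fun x =>
        ((ε ^ 2 * ρ x + τ * (S2 + S3)) / (τ * ε ^ 2)) * (φ2 x) ^ 2
          - (S1 + S4) * (lap φ2 x * φ2 x)) Ω := hI4.sub k8
    have k486 : IntegrableOn (fun x =>
        ((ε ^ 2 * ρ x + τ * (S2 + S3)) / (τ * ε ^ 2)) * (φ2 x) ^ 2
          - (S1 + S4) * (lap φ2 x * φ2 x) + (lam / (ε * K)) * (T2 x) ^ 2) Ω :=
      k48.add k6
    rw [integral_sub k486 k9, integral_add k48 k6, integral_sub hI4 k8,
      integral_const_mul _ _, integral_const_mul _ _, integral_const_mul _ _]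
  have lincomb :
      -(∫ x in Ω, g x * φ2 x)
        + (τ * lam / ε) * (∫ x in Ω, h x * (1 / ρ x) * (μn x * T2 x - Tn x * μ2 x))
        + (τ * lam / ε) * (∫ x in Ω, h x * (1 / ρ x) * Tn x *
            ((S3 / ε ^ 2) * φ2 x - S4 * lap φ2 x))
      = (∫ x in Ω, ((ε ^ 2 * ρ x + τ * (S2 + S3)) / (τ * ε ^ 2)) * (φ2 x) ^ 2)
        - (S1 + S4) * (-∫ x in Ω, ‖gradient φ2 x‖ ^ 2)
        + (lam / (ε * K)) * (∫ x in Ω, (T2 x) ^ 2)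
        - (τ * lam * D / (ε * K)) * (-∫ x in Ω, ‖gradient T2 x‖ ^ 2) := by
    rw [← hibp1, ← hibp2, ← splitL, keyInt, splitR]
  have hmain : A1 = 2 * e
      + (∫ x in Ω, ((ε ^ 2 * ρ x + τ * (S2 + S3)) / (τ * ε ^ 2)) * (φ2 x) ^ 2)
      + (S1 + S4) * (∫ x in Ω, ‖gradient φ2 x‖ ^ 2)
      + (lam / (ε * K)) * ((∫ x in Ω, (T2 x) ^ 2)
          + τ * D * ∫ x in Ω, ‖gradient T2 x‖ ^ 2) := by
    rw [hA1]
    linear_combination lincomb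
  -- nonnegativity of the integrals
  have n4 : 0 ≤ ∫ x in Ω, ((ε ^ 2 * ρ x + τ * (S2 + S3)) / (τ * ε ^ 2)) * (φ2 x) ^ 2 := by
    refine setIntegral_nonneg hΩ fun x hx => ?_
    have h1 : 0 ≤ ε ^ 2 * ρ x + τ * (S2 + S3) := by
      have := mul_nonneg (pow_nonneg hε.le 2) (hρ x hx).le
      have := mul_nonneg hτ.le (add_nonneg hS2 hS3)
      linarith
    have h2 : 0 < τ * ε ^ 2 := by positivity
    exact mul_nonneg (div_nonneg h1 h2.le) (sq_nonneg _)
  have n5 : 0 ≤ ∫ x in Ω, ‖gradient φ2 x‖ ^ 2 :=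
    setIntegral_nonneg hΩ fun x _ => by positivity
  have n6 : 0 ≤ ∫ x in Ω, (T2 x) ^ 2 :=
    setIntegral_nonneg hΩ fun x _ => by positivity
  have n7 : 0 ≤ ∫ x in Ω, ‖gradient T2 x‖ ^ 2 :=
    setIntegral_nonneg hΩ fun x _ => by positivity
  have hpos : 0 < A1 := by
    rw [hmain]
    have m1 : 0 ≤ (S1 + S4) * (∫ x in Ω, ‖gradient φ2 x‖ ^ 2) :=
      mul_nonneg (add_nonneg hS1 hS4) n5
    have m2 : 0 ≤ (lam / (ε * K)) * ((∫ x in Ω, (T2 x) ^ 2)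
        + τ * D * ∫ x in Ω, ‖gradient T2 x‖ ^ 2) :=
      mul_nonneg (div_nonneg hlam.le (mul_nonneg hε.le hK.le))
        (add_nonneg n6 (mul_nonneg (mul_nonneg hτ.le hD.le) n7))
    linarith
  exact ⟨hmain, hpos, fun A2 ξ => (eq_div_iff hpos.ne').symm⟩
end

section
/- Simplification of A₂ (equation (3.18)). Under the hypotheses listed in the context, the quantity A₂ := 2√e·Rⁿ + ∫ gⁿ·(φ₁ − φⁿ) − (τλ/ε)∫ hⁿ·(1/ϱⁿ)·(μⁿ·T₁ − Tⁿ·μ₁) − (τλ/ε)∫ hⁿ·(1/ϱⁿ)·Tⁿ·((S₃/ε²)(φ₁ − φⁿ) − S₄(Δφ₁ − Δφⁿ)) satisfies A₂ = 2√e·Rⁿ − ∫ (μ₂ − S₁Δφ₂ + (S₂/ε²)φ₂)·(φ₁ − φⁿ) + (λ/(εK))∫ (−T₂ + τD·ΔT₂)·T₁. -/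
open MeasureTheory
open scoped RealInnerProductSpace

/-- **Simplification of A₂ (equation (3.18)).**
`φ1, μ1, T1` and `φ2, μ2, T2` solve the decoupled sub-problems; `g = g(φⁿ)`, `h = h′(φⁿ)`,
`Tn = Tⁿ`, `μn = μⁿ`, `ρ = ϱ(φⁿ)`, `e = E₁(φⁿ) > 0`, `Rn = Rⁿ`. -/
theorem A2_simplification
    (Ω : Set Plane) (hΩ : MeasurableSet Ω)
    (τ ε K lam D S1 S2 S3 S4 : ℝ) (hτ : 0 < τ) (hε : 0 < ε) (hK : 0 < K)
    (e : ℝ) (he : 0 < e) (Rn : ℝ)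
    (φ1 φn φ2 T2 : Plane → ℝ)
    (hφ1 : ContDiff ℝ 2 φ1) (hφn : ContDiff ℝ 2 φn)
    (hφ2 : ContDiff ℝ 2 φ2) (hT2 : ContDiff ℝ 2 T2)
    (μ1 μ2 μn g h Tn T1 ρ : Plane → ℝ) (hρ : ∀ x ∈ Ω, 0 < ρ x)
    -- every integrand appearing is assumed integrable over Ω:
    (hI1 : IntegrableOn (fun x => g x * (φ1 x - φn x)) Ω)
    (hI2 : IntegrableOn (fun x => h x * (1 / ρ x) * (μn x * T1 x - Tn x * μ1 x)) Ω)
    (hI3 : IntegrableOn (fun x => h x * (1 / ρ x) * Tn x *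
        ((S3 / ε ^ 2) * (φ1 x - φn x) - S4 * (lap φ1 x - lap φn x))) Ω)
    (hI4 : IntegrableOn
        (fun x => (μ2 x - S1 * lap φ2 x + (S2 / ε ^ 2) * φ2 x) * (φ1 x - φn x)) Ω)
    (hI5 : IntegrableOn (fun x => (-T2 x + τ * D * lap T2 x) * T1 x) Ω)
    -- the sub-problem equations:
    (hi : ∀ x ∈ Ω, (φ1 x - φn x) / τ
        = (1 / ρ x) * (μ1 x - (S3 / ε ^ 2) * (φ1 x - φn x) + S4 * (lap φ1 x - lap φn x)))
    (hii : ∀ x ∈ Ω, μ2 x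
        = -g x + S1 * lap φ2 x - (S2 / ε ^ 2) * φ2 x - (lam / ε) * h x * Tn x)
    (hiii : ∀ x ∈ Ω, T2 x / τ = D * lap T2 x + K * h x * (1 / ρ x) * μn x)
    -- the quantity A₂:
    (A2 : ℝ)
    (hA2 : A2 = 2 * Real.sqrt e * Rn + (∫ x in Ω, g x * (φ1 x - φn x))
        - (τ * lam / ε) * (∫ x in Ω, h x * (1 / ρ x) * (μn x * T1 x - Tn x * μ1 x))
        - (τ * lam / ε) * (∫ x in Ω, h x * (1 / ρ x) * Tn x *
            ((S3 / ε ^ 2) * (φ1 x - φn x) - S4 * (lap φ1 x - lap φn x)))) :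
    A2 = 2 * Real.sqrt e * Rn
        - (∫ x in Ω, (μ2 x - S1 * lap φ2 x + (S2 / ε ^ 2) * φ2 x) * (φ1 x - φn x))
        + (lam / (ε * K)) * ∫ x in Ω, (-T2 x + τ * D * lap T2 x) * T1 x := by
  set f1 : Plane → ℝ := fun x => g x * (φ1 x - φn x) with hf1
  set f2 : Plane → ℝ := fun x => h x * (1 / ρ x) * (μn x * T1 x - Tn x * μ1 x) with hf2
  set f3 : Plane → ℝ := fun x => h x * (1 / ρ x) * Tn x *
      ((S3 / ε ^ 2) * (φ1 x - φn x) - S4 * (lap φ1 x - lap φn x)) with hf3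
  set f4 : Plane → ℝ := fun x =>
      (μ2 x - S1 * lap φ2 x + (S2 / ε ^ 2) * φ2 x) * (φ1 x - φn x) with hf4
  set f5 : Plane → ℝ := fun x => (-T2 x + τ * D * lap T2 x) * T1 x with hf5
  have hτ' : τ ≠ 0 := hτ.ne'
  have hε' : ε ≠ 0 := hε.ne'
  have hK' : K ≠ 0 := hK.ne'
  have key : (∫ x in Ω, (f1 x - (τ * lam / ε) * f2 x - (τ * lam / ε) * f3 x + f4 x
      - (lam / (ε * K)) * f5 x)) = 0 := by
    have heq : Set.EqOn (fun x => f1 x - (τ * lam / ε) * f2 x - (τ * lam / ε) * f3 x + f4 x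
        - (lam / (ε * K)) * f5 x) (fun _ => (0 : ℝ)) Ω := by
      intro x hx
      have h1 := hi x hx
      have h2 := hii x hx
      have h3 := hiii x hx
      have hρ' : ρ x ≠ 0 := (hρ x hx).ne'
      have E3 : T2 x = τ * (D * lap T2 x + K * h x * (1 / ρ x) * μn x) := by
        rw [mul_comm]
        exact (div_eq_iff hτ').mp h3
      have E1 : h x * Tn x * ((1 / ρ x) * μ1 x
            - (1 / ρ x) * ((S3 / ε ^ 2) * (φ1 x - φn x) - S4 * (lap φ1 x - lap φn x)))
          = h x * Tn x * ((φ1 x - φn x) * (1 / τ)) := by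
        linear_combination (-(h x * Tn x)) * h1
      have hc1 : lam / (ε * K) * K = lam / ε := by field_simp
      have hc2 : τ * lam / ε * (1 / τ) = lam / ε := by field_simp
      simp only [hf1, hf2, hf3, hf4, hf5]
      linear_combination (φ1 x - φn x) * h2 + (lam / (ε * K)) * T1 x * E3
        + (τ * lam / ε) * E1 + (τ * h x * (1 / ρ x) * μn x * T1 x) * hc1
        + (h x * Tn x * (φ1 x - φn x)) * hc2
    rw [setIntegral_congr_fun hΩ heq]
    simp
  have e2 : IntegrableOn (fun x => (τ * lam / ε) * f2 x) Ω := hI2.const_mul _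
  have e3 : IntegrableOn (fun x => (τ * lam / ε) * f3 x) Ω := hI3.const_mul _
  have e5 : IntegrableOn (fun x => (lam / (ε * K)) * f5 x) Ω := hI5.const_mul _
  have e12 : IntegrableOn (fun x => f1 x - (τ * lam / ε) * f2 x) Ω := hI1.sub e2
  have e123 : IntegrableOn (fun x => f1 x - (τ * lam / ε) * f2 x - (τ * lam / ε) * f3 x) Ω :=
    e12.sub e3
  have e1234 : IntegrableOn
      (fun x => f1 x - (τ * lam / ε) * f2 x - (τ * lam / ε) * f3 x + f4 x) Ω := e123.add hI4
  rw [MeasureTheory.integral_sub e1234 e5, MeasureTheory.integral_add e123 hI4,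
    MeasureTheory.integral_sub e12 e3, MeasureTheory.integral_sub hI1 e2,
    MeasureTheory.integral_const_mul, MeasureTheory.integral_const_mul,
    MeasureTheory.integral_const_mul] at key
  rw [hA2]
  linarith [key]
end
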